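/- arXiv:2010.04790 — 6 statements merged into one kernel-verified Lean document; each statement's English description precedes it below -/
import Mathlib

section
/- For every part V_j of a q-partition of G, it holds that √2 · relout(V_j) ≥ ‖(L − L̄) ū_j‖₂, where ‖·‖₂ is the Euclidean norm on ℝⁿ. -/
open Matrix

/-- The weighted degree matrix of `A`. -/
noncomputable def degMat {n : ℕ} (A : Matrix (Fin n) (Fin n) ℝ) :
    Matrix (Fin n) (Fin n) ℝ :=
  Matrix.diagonal (fun k => ∑ l, A k l)

/-- The graph Laplacian `L = D - A`. -/
noncomputable def lap {n : ℕ} (A : Matrix (Fin n) (Fin n) ℝ) :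
    Matrix (Fin n) (Fin n) ℝ :=
  degMat A - A

/-- Adjacency matrix of the `q`-partitioned graph: entries of `A` within a part are
kept, entries between different parts are set to zero. -/
noncomputable def partAdj {n q : ℕ} (A : Matrix (Fin n) (Fin n) ℝ)
    (V : Fin q → Finset (Fin n)) : Matrix (Fin n) (Fin n) ℝ :=
  fun k l => if ∃ j : Fin q, k ∈ V j ∧ l ∈ V j then A k l else 0

/-- The unit vector that is uniform (`1/√|V j|`) on part `V j` and `0` elsewhere. -/
noncomputable def ubar {n q : ℕ} (V : Fin q → Finset (Fin n)) (j : Fin q) :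
    Fin n → ℝ :=
  fun i => if i ∈ V j then (Real.sqrt ((V j).card))⁻¹ else 0

/-- The relative outgoing weight of the part `V j`:
`relout(V_j) = (1/√|V_j|) ∑_{k∈V_j, l∉V_j} A_{kl}`. -/
noncomputable def relout {n q : ℕ} (A : Matrix (Fin n) (Fin n) ℝ)
    (V : Fin q → Finset (Fin n)) (j : Fin q) : ℝ :=
  (Real.sqrt ((V j).card))⁻¹ * ∑ k ∈ V j, ∑ l ∈ (V j)ᶜ, A k l

/-! `L - L̄` is the Laplacian of the graph that keeps only the edges running between different
parts, and for any Laplacian `L_B` the vector `L_B 1_S` is, on `S`, the weight leaving each vertex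
of `S` and, off `S`, minus the weight entering `S` from that vertex. Both halves of its squared norm
are sums of squares of nonnegative numbers adding up to the cut weight of `S`, so each is at most
the squared cut weight. For `S = V_j` the cut weight in the cut graph is the one in `G`. -/

def cutWeight {n : ℕ} (B : Matrix (Fin n) (Fin n) ℝ) (S : Finset (Fin n)) : ℝ :=
  ∑ k ∈ S, ∑ l ∈ Sᶜ, B k l

section Laplacian

variable {n : ℕ}

theorem lap_sub (A B : Matrix (Fin n) (Fin n) ℝ) : lap (A - B) = lap A - lap B := by
  ext k l
  simp only [lap, degMat, Matrix.sub_apply, diagonal_apply, Finset.sum_sub_distrib]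
  split_ifs <;> ring

theorem lap_mulVec_ite (B : Matrix (Fin n) (Fin n) ℝ) (S : Finset (Fin n)) (c : ℝ) (i : Fin n) :
    (lap B *ᵥ fun l => if l ∈ S then c else 0) i
      = c * if i ∈ S then ∑ l ∈ Sᶜ, B i l else -∑ l ∈ S, B i l := by
  have hdeg : ∑ l, B i l = ∑ l ∈ S, B i l + ∑ l ∈ Sᶜ, B i l :=
    (Finset.sum_add_sum_compl S _).symm
  have hB : (B *ᵥ fun l => if l ∈ S then c else 0) i = (∑ l ∈ S, B i l) * c := by
    simp only [mulVec, dotProduct, mul_ite, mul_zero, Finset.sum_ite_mem, Finset.univ_inter,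
      Finset.sum_mul]
  rw [lap, sub_mulVec, Pi.sub_apply, degMat, mulVec_diagonal, hB, hdeg]
  split_ifs <;> ring

theorem cutWeight_nonneg {B : Matrix (Fin n) (Fin n) ℝ} (hnonneg : ∀ k l, 0 ≤ B k l)
    (S : Finset (Fin n)) : 0 ≤ cutWeight B S :=
  Finset.sum_nonneg fun k _ => Finset.sum_nonneg fun l _ => hnonneg k l

theorem cutWeight_compl {B : Matrix (Fin n) (Fin n) ℝ} (hsymm : ∀ k l, B k l = B l k)
    (S : Finset (Fin n)) : cutWeight B Sᶜ = cutWeight B S := by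
  rw [cutWeight, cutWeight, compl_compl]
  refine Finset.sum_comm.trans <| Finset.sum_congr rfl fun k _ =>
    Finset.sum_congr rfl fun l _ => hsymm l k

theorem sqrt_sum_sq_lap_mulVec_ite_le {B : Matrix (Fin n) (Fin n) ℝ}
    (hsymm : ∀ k l, B k l = B l k) (hnonneg : ∀ k l, 0 ≤ B k l) (S : Finset (Fin n))
    {c : ℝ} (hc : 0 ≤ c) :
    √(∑ i, ((lap B *ᵥ fun l => if l ∈ S then c else 0) i) ^ 2)
      ≤ √2 * (c * cutWeight B S) := by
  have hin : ∑ i ∈ S, (∑ l ∈ Sᶜ, B i l) ^ 2 ≤ cutWeight B S ^ 2 :=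
    Finset.sum_sq_le_sq_sum_of_nonneg fun i _ => Finset.sum_nonneg fun l _ => hnonneg i l
  have hout : ∑ i ∈ Sᶜ, (∑ l ∈ S, B i l) ^ 2 ≤ cutWeight B S ^ 2 := by
    have hcompl := cutWeight_compl hsymm S
    rw [cutWeight, compl_compl] at hcompl
    exact hcompl ▸
      Finset.sum_sq_le_sq_sum_of_nonneg fun i _ => Finset.sum_nonneg fun l _ => hnonneg i l
  have hbound : ∑ i, ((lap B *ᵥ fun l => if l ∈ S then c else 0) i) ^ 2
      ≤ 2 * (c * cutWeight B S) ^ 2 :=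
    calc _ = c ^ 2 * (∑ i ∈ S, (∑ l ∈ Sᶜ, B i l) ^ 2
            + ∑ i ∈ Sᶜ, (∑ l ∈ S, B i l) ^ 2) := by
          simp_rw [lap_mulVec_ite, mul_pow, ← Finset.mul_sum]
          rw [← Finset.sum_add_sum_compl S]
          congr 2
          · exact Finset.sum_congr rfl fun i hi => by rw [if_pos hi]
          · exact Finset.sum_congr rfl fun i hi => by
              rw [if_neg (Finset.mem_compl.1 hi), neg_sq]
      _ ≤ c ^ 2 * (cutWeight B S ^ 2 + cutWeight B S ^ 2) := by gcongr
      _ = 2 * (c * cutWeight B S) ^ 2 := by ring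
  calc _ ≤ √(2 * (c * cutWeight B S) ^ 2) := Real.sqrt_le_sqrt hbound
    _ = √2 * (c * cutWeight B S) := by
        rw [Real.sqrt_mul zero_le_two, Real.sqrt_sq (mul_nonneg hc (cutWeight_nonneg hnonneg S))]

end Laplacian

section Partition

variable {n q : ℕ}

theorem sub_partAdj_apply (A : Matrix (Fin n) (Fin n) ℝ) (V : Fin q → Finset (Fin n))
    (k l : Fin n) :
    (A - partAdj A V) k l = if ∃ j, k ∈ V j ∧ l ∈ V j then 0 else A k l := by
  rw [Matrix.sub_apply, partAdj]
  split_ifs <;> ring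

theorem sub_partAdj_symm {A : Matrix (Fin n) (Fin n) ℝ} (hsymm : ∀ k l, A k l = A l k)
    (V : Fin q → Finset (Fin n)) (k l : Fin n) :
    (A - partAdj A V) k l = (A - partAdj A V) l k := by
  simp only [sub_partAdj_apply, hsymm k l, and_comm]

theorem sub_partAdj_nonneg {A : Matrix (Fin n) (Fin n) ℝ} (hnonneg : ∀ k l, 0 ≤ A k l)
    (V : Fin q → Finset (Fin n)) (k l : Fin n) : 0 ≤ (A - partAdj A V) k l := by
  rw [sub_partAdj_apply]
  split_ifs
  exacts [le_rfl, hnonneg k l]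

theorem cutWeight_sub_partAdj (A : Matrix (Fin n) (Fin n) ℝ) {V : Fin q → Finset (Fin n)}
    (hdisj : ∀ j j' : Fin q, j ≠ j' → Disjoint (V j) (V j')) (j : Fin q) :
    cutWeight (A - partAdj A V) (V j) = cutWeight A (V j) := by
  refine Finset.sum_congr rfl fun k hk => Finset.sum_congr rfl fun l hl => ?_
  have hsep : ¬∃ j', k ∈ V j' ∧ l ∈ V j' := by
    rintro ⟨j', hk', hl'⟩
    obtain rfl : j' = j := by
      by_contra hne
      exact Finset.disjoint_left.1 (hdisj j' j hne) hk' hk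
    exact Finset.mem_compl.1 hl hl'
  rw [sub_partAdj_apply, if_neg hsep]

end Partition

theorem stmt_1_general (n q : ℕ) (A : Matrix (Fin n) (Fin n) ℝ)
    (hsymm : ∀ k l, A k l = A l k)
    (hnonneg : ∀ k l, 0 ≤ A k l)
    (V : Fin q → Finset (Fin n))
    (hdisj : ∀ j j' : Fin q, j ≠ j' → Disjoint (V j) (V j'))
    (j : Fin q) :
    Real.sqrt 2 * relout A V j
      ≥ Real.sqrt (∑ i, (((lap A - lap (partAdj A V)).mulVec (ubar V j)) i) ^ 2) := by
  rw [← lap_sub, relout, ← cutWeight, ← cutWeight_sub_partAdj A hdisj]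
  exact sqrt_sum_sq_lap_mulVec_ite_le (sub_partAdj_symm hsymm V) (sub_partAdj_nonneg hnonneg V)
    (V j) (inv_nonneg.2 (Real.sqrt_nonneg _))

/-- `√2 · relout(V_j) ≥ ‖(L − L̄) ū_j‖₂` for every part of a q-partition. -/
theorem stmt_1 (n q : ℕ) (A : Matrix (Fin n) (Fin n) ℝ)
    (hsymm : ∀ k l, A k l = A l k)
    (hnonneg : ∀ k l, 0 ≤ A k l)
    (hdiag : ∀ k, A k k = 0)
    (hq1 : 1 ≤ q) (hqn : q ≤ n - 1)
    (V : Fin q → Finset (Fin n))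
    (hne : ∀ j, (V j).Nonempty)
    (hdisj : ∀ j j' : Fin q, j ≠ j' → Disjoint (V j) (V j'))
    (hcover : ∀ i : Fin n, ∃ j : Fin q, i ∈ V j)
    (j : Fin q) :
    Real.sqrt 2 * relout A V j
      ≥ Real.sqrt (∑ i, (((lap A - lap (partAdj A V)).mulVec (ubar V j)) i) ^ 2) :=
  stmt_1_general n q A hsymm hnonneg V hdisj j
end

section
/- If λ_q > 0 and G admits an α-realizable q-partition for some α ∈ [0,1), then λ_{q−1}/λ_q ≤ α/√(1−α²). -/
/-! Let `X` be the matrix whose columns are the normalized indicator vectors of the parts;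
they are orthonormal. Some nonzero `x = X w` is orthogonal to the first `q - 1` eigenvectors,
so `λ_{q-1} ‖w‖² ≤ xᵀ L x = wᵀ (Xᵀ L X) w ≤ ‖w‖² ‖Xᵀ L X‖_F`. The diagonal entry of row `j` of
`Xᵀ L X` is `cut(V_j) / |V_j|` and its off-diagonal entries are, up to normalization, the
weights between `V_j` and the other parts, which add up to at most `cut(V_j)`; so the row has
squared norm at most `2 relout(V_j)²`. Hence `λ_{q-1} ≤ √(2q) avgrelout ≤ α λ_q`, and
`α ≤ α / √(1 - α²)`. -/

open Matrix

/-- The average relative outgoing weight of a `q`-partition. -/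
noncomputable def avgrelout {n q : ℕ} (A : Matrix (Fin n) (Fin n) ℝ)
    (V : Fin q → Finset (Fin n)) : ℝ :=
  Real.sqrt ((1 / (q : ℝ)) * ∑ j : Fin q, (relout A V j) ^ 2)

open Finset Function

lemma mulVec_dotProduct_mulVec_mulVec {m κ : Type*} [Fintype m] [Fintype κ] (X : Matrix m κ ℝ)
    (M : Matrix m m ℝ) (w : κ → ℝ) :
    X *ᵥ w ⬝ᵥ M *ᵥ (X *ᵥ w) = w ⬝ᵥ (Xᵀ * M * X) *ᵥ w := by
  rw [mulVec_mulVec, dotProduct_mulVec, ← vecMul_transpose, vecMul_vecMul, ← dotProduct_mulVec,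
    Matrix.mul_assoc]

section Spectral

variable {ι : Type*} [Fintype ι] [DecidableEq ι] {U : Matrix ι ι ℝ}

lemma dotProduct_self_eq_sum_sq_mulVec (hU : U * Uᵀ = 1) (x : ι → ℝ) :
    x ⬝ᵥ x = ∑ i, (U *ᵥ x) i ^ 2 := by
  have hUT : Uᵀ * U = 1 := mul_eq_one_comm.mp hU
  calc x ⬝ᵥ x = x ⬝ᵥ (Uᵀ * U) *ᵥ x := by rw [hUT, one_mulVec]
    _ = (U *ᵥ x) ⬝ᵥ (U *ᵥ x) := by
      rw [← mulVec_mulVec, dotProduct_mulVec, vecMul_transpose]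
    _ = ∑ i, (U *ᵥ x) i ^ 2 := by simp only [dotProduct, sq]

lemma dotProduct_mulVec_eq_sum_eigenvalue_mul_sq {M : Matrix ι ι ℝ} {lam : ι → ℝ}
    (hU : U * Uᵀ = 1) (hM : ∀ i, M *ᵥ U i = lam i • U i) (x : ι → ℝ) :
    x ⬝ᵥ M *ᵥ x = ∑ i, lam i * (U *ᵥ x) i ^ 2 := by
  have hMU : M * Uᵀ = Uᵀ * diagonal lam := by
    ext k i
    rw [mul_diagonal]
    simpa [mul_apply, mulVec, dotProduct, mul_comm] using congrFun (hM i) k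
  have hx : x = Uᵀ *ᵥ (U *ᵥ x) := by rw [mulVec_mulVec, mul_eq_one_comm.mp hU, one_mulVec]
  rw [hx, mulVec_dotProduct_mulVec_mulVec, transpose_transpose, mul_assoc, hMU, ← mul_assoc, hU,
    one_mul, ← hx]
  simp only [mulVec_diagonal, dotProduct, sq]
  exact sum_congr rfl fun i _ => by ring

lemma mul_dotProduct_self_le_dotProduct_mulVec {M : Matrix ι ι ℝ} {lam : ι → ℝ} {μ : ℝ}
    (hU : U * Uᵀ = 1) (hM : ∀ i, M *ᵥ U i = lam i • U i) {x : ι → ℝ}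
    (hx : ∀ i, (U *ᵥ x) i ≠ 0 → μ ≤ lam i) :
    μ * (x ⬝ᵥ x) ≤ x ⬝ᵥ M *ᵥ x := by
  rw [dotProduct_self_eq_sum_sq_mulVec hU, dotProduct_mulVec_eq_sum_eigenvalue_mul_sq hU hM,
    mul_sum]
  refine sum_le_sum fun i _ => ?_
  by_cases hi : (U *ᵥ x) i = 0
  · simp [hi]
  · exact mul_le_mul_of_nonneg_right (hx i hi) (sq_nonneg _)

end Spectral

lemma exists_ne_zero_mulVec_eq_zero {m κ : Type*} [Fintype m] [Fintype κ] (B : Matrix m κ ℝ)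
    (h : Fintype.card m < Fintype.card κ) : ∃ w ≠ 0, B *ᵥ w = 0 := by
  have := LinearMap.ker_ne_bot_of_finrank_lt (f := B.mulVecLin) (by simpa using h)
  obtain ⟨w, hw, hw0⟩ := (Submodule.ne_bot_iff _).mp this
  exact ⟨w, hw0, hw⟩

lemma sq_dotProduct_mulVec_le {κ : Type*} [Fintype κ] (G : Matrix κ κ ℝ) (w : κ → ℝ) :
    (w ⬝ᵥ G *ᵥ w) ^ 2 ≤ (w ⬝ᵥ w) ^ 2 * ∑ j, ∑ j', G j j' ^ 2 := by
  have hrow : ∀ j, (G *ᵥ w) j ^ 2 ≤ (∑ j', G j j' ^ 2) * (w ⬝ᵥ w) := by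
    intro j
    simpa [mulVec, dotProduct, sq] using sum_mul_sq_le_sq_mul_sq univ (G j) w
  calc (w ⬝ᵥ G *ᵥ w) ^ 2 ≤ (w ⬝ᵥ w) * ∑ j, (G *ᵥ w) j ^ 2 := by
        simpa [dotProduct, sq] using sum_mul_sq_le_sq_mul_sq univ w (G *ᵥ w)
    _ ≤ (w ⬝ᵥ w) * ∑ j, (∑ j', G j j' ^ 2) * (w ⬝ᵥ w) := by
        gcongr with j
        · exact dotProduct_self_star_nonneg w
        · exact hrow j
    _ = (w ⬝ᵥ w) ^ 2 * ∑ j, ∑ j', G j j' ^ 2 := by rw [← sum_mul]; ring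

lemma dotProduct_mulVec_le_mul_sqrt {κ : Type*} [Fintype κ] (G : Matrix κ κ ℝ) (w : κ → ℝ) :
    w ⬝ᵥ G *ᵥ w ≤ (w ⬝ᵥ w) * √(∑ j, ∑ j', G j j' ^ 2) := by
  have hww : 0 ≤ w ⬝ᵥ w := dotProduct_self_star_nonneg w
  rw [← Real.sqrt_sq hww, ← Real.sqrt_mul (sq_nonneg _)]
  exact (le_abs_self _).trans (Real.abs_le_sqrt (sq_dotProduct_mulVec_le G w))

section Laplacian

variable {n : ℕ} (A : Matrix (Fin n) (Fin n) ℝ)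

lemma sum_lap_apply (k : Fin n) (s : Finset (Fin n)) :
    ∑ l ∈ s, lap A k l = (if k ∈ s then ∑ l, A k l else 0) - ∑ l ∈ s, A k l := by
  simp [lap, degMat, Matrix.sub_apply, diagonal_apply, sum_sub_distrib]

lemma sum_sum_lap_self (s : Finset (Fin n)) :
    ∑ k ∈ s, ∑ l ∈ s, lap A k l = ∑ k ∈ s, ∑ l ∈ sᶜ, A k l :=
  sum_congr rfl fun k hk => by
    rw [sum_lap_apply, if_pos hk, ← sum_add_sum_compl s (A k), add_sub_cancel_left]

lemma sum_sum_lap_of_disjoint {s t : Finset (Fin n)} (hst : Disjoint s t) :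
    ∑ k ∈ s, ∑ l ∈ t, lap A k l = -∑ k ∈ s, ∑ l ∈ t, A k l := by
  rw [← sum_neg_distrib]
  exact sum_congr rfl fun k hk => by
    rw [sum_lap_apply, if_neg (disjoint_left.mp hst hk), zero_sub]

end Laplacian

section Partition

noncomputable def normalizedIndicatorMatrix {ι κ : Type*} [DecidableEq ι] (V : κ → Finset ι) :
    Matrix ι κ ℝ :=
  of fun k j => if k ∈ V j then (√(#(V j) : ℝ))⁻¹ else 0

variable {ι κ : Type*} [Fintype ι] [DecidableEq ι] {V : κ → Finset ι}

lemma sum_normalizedIndicatorMatrix_mul (f : ι → ℝ) (j : κ) :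
    ∑ k, normalizedIndicatorMatrix V k j * f k = (√(#(V j) : ℝ))⁻¹ * ∑ k ∈ V j, f k := by
  simp [normalizedIndicatorMatrix, ite_mul, sum_ite_mem, mul_sum]

lemma transpose_mul_mul_normalizedIndicatorMatrix_apply [Fintype κ] (M : Matrix ι ι ℝ)
    (j j' : κ) :
    ((normalizedIndicatorMatrix V)ᵀ * M * normalizedIndicatorMatrix V) j j' =
      (√(#(V j) : ℝ))⁻¹ * (√(#(V j') : ℝ))⁻¹ * ∑ k ∈ V j, ∑ l ∈ V j', M k l := by
  have hrow : ∀ k, (M * normalizedIndicatorMatrix V) k j' =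
      (√(#(V j') : ℝ))⁻¹ * ∑ l ∈ V j', M k l := fun k => by
    simp only [mul_apply, mul_comm (M k _), sum_normalizedIndicatorMatrix_mul]
  simp only [Matrix.mul_assoc, mul_apply (M := (normalizedIndicatorMatrix V)ᵀ), transpose_apply,
    hrow, sum_normalizedIndicatorMatrix_mul, ← mul_sum, mul_assoc]

lemma transpose_mul_normalizedIndicatorMatrix [Fintype κ] [DecidableEq κ]
    (hne : ∀ j, (V j).Nonempty) (hdisj : Pairwise (Disjoint on V)) :
    (normalizedIndicatorMatrix V)ᵀ * normalizedIndicatorMatrix V = 1 := by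
  ext j j'
  simp only [mul_apply, transpose_apply, sum_normalizedIndicatorMatrix_mul, one_apply]
  split_ifs with h
  · subst h
    have hcard : (0 : ℝ) < #(V j) := by exact_mod_cast (hne j).card_pos
    simp only [normalizedIndicatorMatrix, of_apply]
    rw [sum_ite_of_true fun k hk => hk, sum_const, nsmul_eq_mul, mul_left_comm,
      ← sq, inv_pow, Real.sq_sqrt hcard.le, mul_inv_cancel₀ hcard.ne']
  · rw [sum_eq_zero fun k hk => ?_, mul_zero]
    simp [normalizedIndicatorMatrix, disjoint_left.mp (hdisj h) hk]

end Partition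

lemma inv_sqrt_card_le_one {ι : Type*} {s : Finset ι} (hs : s.Nonempty) :
    (√(#s : ℝ))⁻¹ ≤ 1 :=
  inv_le_one_of_one_le₀ (Real.one_le_sqrt.mpr (by exact_mod_cast hs.card_pos))

lemma sum_erase_sum_sum_le_sum_sum_compl {ι κ : Type*} [Fintype ι] [DecidableEq ι] [Fintype κ]
    [DecidableEq κ] {A : Matrix ι ι ℝ} (hA : ∀ k l, 0 ≤ A k l) {V : κ → Finset ι}
    (hdisj : Pairwise (Disjoint on V)) (j : κ) :
    ∑ j' ∈ univ.erase j, ∑ k ∈ V j, ∑ l ∈ V j', A k l ≤ ∑ k ∈ V j, ∑ l ∈ (V j)ᶜ, A k l := by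
  rw [sum_comm]
  refine sum_le_sum fun k _ => ?_
  rw [← sum_biUnion fun j₁ _ j₂ _ h => hdisj h]
  refine sum_le_sum_of_subset_of_nonneg (fun l hl => ?_) fun l _ _ => hA k l
  obtain ⟨j', hj', hl⟩ := mem_biUnion.mp hl
  exact mem_compl.mpr fun hlj => disjoint_left.mp (hdisj (ne_of_mem_erase hj')) hl hlj

lemma sum_sq_transpose_mul_lap_mul_normalizedIndicatorMatrix_le {n q : ℕ}
    {A : Matrix (Fin n) (Fin n) ℝ} (hA : ∀ k l, 0 ≤ A k l) {V : Fin q → Finset (Fin n)}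
    (hne : ∀ j, (V j).Nonempty) (hdisj : Pairwise (Disjoint on V)) (j : Fin q) :
    ∑ j', ((normalizedIndicatorMatrix V)ᵀ * lap A * normalizedIndicatorMatrix V) j j' ^ 2 ≤
      2 * relout A V j ^ 2 := by
  set c : Fin q → ℝ := fun i => (√(#(V i) : ℝ))⁻¹
  set W : Fin q → ℝ := fun j' => ∑ k ∈ V j, ∑ l ∈ V j', A k l
  set cut := ∑ k ∈ V j, ∑ l ∈ (V j)ᶜ, A k l
  have hc1 : ∀ i, c i ^ 2 ≤ 1 := fun i =>
    pow_le_one₀ (inv_nonneg.mpr (Real.sqrt_nonneg _)) (inv_sqrt_card_le_one (hne i))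
  have hW0 : ∀ j', 0 ≤ W j' := fun j' => sum_nonneg fun k _ => sum_nonneg fun l _ => hA k l
  have hrelout : relout A V j = c j * cut := rfl
  have hdiag : ((normalizedIndicatorMatrix V)ᵀ * lap A * normalizedIndicatorMatrix V) j j ^ 2
      ≤ relout A V j ^ 2 := by
    rw [transpose_mul_mul_normalizedIndicatorMatrix_apply, sum_sum_lap_self, hrelout]
    calc (c j * c j * cut) ^ 2 = c j ^ 2 * (c j * cut) ^ 2 := by ring
      _ ≤ 1 * (c j * cut) ^ 2 := by gcongr; exact hc1 j
      _ = _ := one_mul _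
  have hoff : ∑ j' ∈ univ.erase j,
      ((normalizedIndicatorMatrix V)ᵀ * lap A * normalizedIndicatorMatrix V) j j' ^ 2
      ≤ relout A V j ^ 2 := by
    have hW : ∑ j' ∈ univ.erase j, W j' ^ 2 ≤ cut ^ 2 :=
      (sum_sq_le_sq_sum_of_nonneg fun j' _ => hW0 j').trans
        (pow_le_pow_left₀ (sum_nonneg fun j' _ => hW0 j')
          (sum_erase_sum_sum_le_sum_sum_compl hA hdisj j) 2)
    calc ∑ j' ∈ univ.erase j,
          ((normalizedIndicatorMatrix V)ᵀ * lap A * normalizedIndicatorMatrix V) j j' ^ 2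
        = ∑ j' ∈ univ.erase j, c j ^ 2 * (c j' ^ 2 * W j' ^ 2) := sum_congr rfl fun j' hj' => by
          rw [transpose_mul_mul_normalizedIndicatorMatrix_apply,
            sum_sum_lap_of_disjoint A (hdisj (ne_of_mem_erase hj').symm)]
          ring
      _ ≤ ∑ j' ∈ univ.erase j, c j ^ 2 * W j' ^ 2 := by
          gcongr with j' _
          exact mul_le_of_le_one_left (sq_nonneg _) (hc1 j')
      _ ≤ c j ^ 2 * cut ^ 2 := by rw [← mul_sum]; gcongr
      _ = relout A V j ^ 2 := by rw [hrelout, mul_pow]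
  rw [← sum_erase_add _ _ (mem_univ j)]
  linarith

theorem eigenvalue_le_sqrt_two_mul_sum_sq_relout {n q : ℕ} (hq1 : 1 ≤ q) (hqn : q < n)
    {A : Matrix (Fin n) (Fin n) ℝ} (hA : ∀ k l, 0 ≤ A k l) {lam : Fin n → ℝ}
    (hmono : Monotone lam) {U : Matrix (Fin n) (Fin n) ℝ} (hU : U * Uᵀ = 1)
    (hL : ∀ i, lap A *ᵥ U i = lam i • U i) {V : Fin q → Finset (Fin n)}
    (hne : ∀ j, (V j).Nonempty) (hdisj : Pairwise (Disjoint on V)) :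
    lam ⟨q - 1, by omega⟩ ≤ √(2 * ∑ j, relout A V j ^ 2) := by
  set X := normalizedIndicatorMatrix V
  set G := Xᵀ * lap A * X
  obtain ⟨w, hw0, hw⟩ := exists_ne_zero_mulVec_eq_zero
    ((U * X).submatrix (Fin.castLE (by omega : q - 1 ≤ n)) id)
    (by simp only [Fintype.card_fin]; omega)
  have hww : 0 < w ⬝ᵥ w :=
    (dotProduct_self_star_nonneg w).lt_of_ne' (mt dotProduct_self_eq_zero.mp hw0)
  have hxx : X *ᵥ w ⬝ᵥ X *ᵥ w = w ⬝ᵥ w := by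
    have hXX : Xᵀ * X = 1 := transpose_mul_normalizedIndicatorMatrix hne hdisj
    simpa [hXX] using mulVec_dotProduct_mulVec_mulVec X 1 w
  have hray : lam ⟨q - 1, by omega⟩ * (X *ᵥ w ⬝ᵥ X *ᵥ w) ≤ X *ᵥ w ⬝ᵥ lap A *ᵥ (X *ᵥ w) := by
    refine mul_dotProduct_self_le_dotProduct_mulVec hU hL fun i hi => hmono ?_
    by_contra! hlt
    exact hi (by rw [mulVec_mulVec]; exact congrFun hw ⟨i, hlt⟩)
  have hG : ∑ j, ∑ j', G j j' ^ 2 ≤ 2 * ∑ j, relout A V j ^ 2 := by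
    rw [mul_sum]
    exact sum_le_sum fun j _ =>
      sum_sq_transpose_mul_lap_mul_normalizedIndicatorMatrix_le hA hne hdisj j
  have : lam ⟨q - 1, by omega⟩ * (w ⬝ᵥ w) ≤ √(2 * ∑ j, relout A V j ^ 2) * (w ⬝ᵥ w) :=
    calc lam ⟨q - 1, by omega⟩ * (w ⬝ᵥ w) ≤ w ⬝ᵥ G *ᵥ w := by
          rwa [hxx, mulVec_dotProduct_mulVec_mulVec] at hray
      _ ≤ (w ⬝ᵥ w) * √(∑ j, ∑ j', G j j' ^ 2) := dotProduct_mulVec_le_mul_sqrt G w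
      _ ≤ √(2 * ∑ j, relout A V j ^ 2) * (w ⬝ᵥ w) := by
          rw [mul_comm]; gcongr
  exact le_of_mul_le_mul_right this hww

lemma sqrt_two_mul_sum_sq_relout {n q : ℕ} (hq : 0 < q) (A : Matrix (Fin n) (Fin n) ℝ)
    (V : Fin q → Finset (Fin n)) :
    √(2 * ∑ j, relout A V j ^ 2) = √(2 * q) * avgrelout A V := by
  have hq' : (0 : ℝ) < q := Nat.cast_pos.mpr hq
  rw [avgrelout, ← Real.sqrt_mul (by positivity)]
  congr 1
  field_simp

lemma le_div_sqrt_one_sub_sq {α : ℝ} (hα0 : 0 ≤ α) (hα1 : α < 1) : α ≤ α / √(1 - α ^ 2) := by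
  have hpos : 0 < √(1 - α ^ 2) := Real.sqrt_pos.mpr (by nlinarith)
  have hle : √(1 - α ^ 2) ≤ 1 := Real.sqrt_le_one.mpr (by nlinarith)
  rw [le_div_iff₀ hpos]
  exact mul_le_of_le_one_right hα0 hle

theorem stmt_3_general (n q : ℕ) (hq1 : 1 ≤ q) (hqn : q < n)
    (A : Matrix (Fin n) (Fin n) ℝ)
    (hnonneg : ∀ k l, 0 ≤ A k l)
    (lam : Fin n → ℝ)
    (hmono : Monotone lam)
    (u : Fin n → Fin n → ℝ)
    (horth : ∀ i j : Fin n, (∑ a, u i a * u j a) = if i = j then (1 : ℝ) else 0)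
    (heig : ∀ i : Fin n, (lap A).mulVec (u i) = lam i • u i)
    (hlamq : 0 < lam ⟨q, hqn⟩)
    (α : ℝ) (hα0 : 0 ≤ α) (hα1 : α < 1)
    (hexists : ∃ V : Fin q → Finset (Fin n),
      (∀ j, (V j).Nonempty) ∧
      (∀ j j' : Fin q, j ≠ j' → Disjoint (V j) (V j')) ∧
      (∀ i : Fin n, ∃ j : Fin q, i ∈ V j) ∧
      avgrelout A V ≤ α * lam ⟨q, hqn⟩ / Real.sqrt (2 * q)) :
    lam ⟨q - 1, Nat.lt_of_le_of_lt (Nat.sub_le q 1) hqn⟩ / lam ⟨q, hqn⟩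
      ≤ α / Real.sqrt (1 - α ^ 2) := by
  obtain ⟨V, hne, hdisj, -, hV⟩ := hexists
  have hU : of u * (of u)ᵀ = 1 := by
    ext i j
    simpa [mul_apply, one_apply] using horth i j
  have hsqrt : 0 < √(2 * q : ℝ) := Real.sqrt_pos.mpr (by positivity)
  have hgap : lam ⟨q - 1, _⟩ ≤ α * lam ⟨q, hqn⟩ :=
    calc lam ⟨q - 1, _⟩ ≤ √(2 * ∑ j, relout A V j ^ 2) :=
          eigenvalue_le_sqrt_two_mul_sum_sq_relout hq1 hqn hnonneg hmono hU heig hne hdisj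
      _ = √(2 * q) * avgrelout A V := sqrt_two_mul_sum_sq_relout hq1 A V
      _ ≤ α * lam ⟨q, hqn⟩ := by rwa [← le_div_iff₀' hsqrt]
  calc _ ≤ α := (div_le_iff₀ hlamq).mpr hgap
    _ ≤ α / √(1 - α ^ 2) := le_div_sqrt_one_sub_sq hα0 hα1

/-- if `λ_q > 0` and `G` admits an α-realizable q-partition with
`α ∈ [0,1)`, then `λ_{q−1}/λ_q ≤ α/√(1−α²)`. -/
theorem stmt_3 (n q : ℕ) (hq1 : 1 ≤ q) (hqn : q < n)
    (A : Matrix (Fin n) (Fin n) ℝ)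
    (hsymm : ∀ k l, A k l = A l k)
    (hnonneg : ∀ k l, 0 ≤ A k l)
    (hdiag : ∀ k, A k k = 0)
    (lam : Fin n → ℝ)
    (hmono : Monotone lam)
    (hlam0 : lam ⟨0, Nat.lt_of_le_of_lt (Nat.zero_le q) hqn⟩ = 0)
    (u : Fin n → Fin n → ℝ)
    (horth : ∀ i j : Fin n, (∑ a, u i a * u j a) = if i = j then (1 : ℝ) else 0)
    (heig : ∀ i : Fin n, (lap A).mulVec (u i) = lam i • u i)
    (hlamq : 0 < lam ⟨q, hqn⟩)
    (α : ℝ) (hα0 : 0 ≤ α) (hα1 : α < 1)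
    (hexists : ∃ V : Fin q → Finset (Fin n),
      (∀ j, (V j).Nonempty) ∧
      (∀ j j' : Fin q, j ≠ j' → Disjoint (V j) (V j')) ∧
      (∀ i : Fin n, ∃ j : Fin q, i ∈ V j) ∧
      avgrelout A V ≤ α * lam ⟨q, hqn⟩ / Real.sqrt (2 * q)) :
    lam ⟨q - 1, Nat.lt_of_le_of_lt (Nat.sub_le q 1) hqn⟩ / lam ⟨q, hqn⟩
      ≤ α / Real.sqrt (1 - α ^ 2) :=
  stmt_3_general n q hq1 hqn A hnonneg lam hmono u horth heig hlamq α hα0 hα1 hexists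
end

section
/- If λ_q > 0 and V_0, …, V_{q−1} is an α-realizable q-partition of G with α ∈ [0,1), then λ_{q−1} ≤ (√(2q)/√(1−α²)) · avgrelout. -/
open Matrix

open Finset
open Matrix Finset

private lemma sum_sq_le_sq_sum' {ι : Type*} (s : Finset ι) (f : ι → ℝ)
    (hf : ∀ i ∈ s, 0 ≤ f i) : ∑ i ∈ s, f i ^ 2 ≤ (∑ i ∈ s, f i) ^ 2 := by
  calc ∑ i ∈ s, f i ^ 2 ≤ ∑ i ∈ s, f i * ∑ j ∈ s, f j := by
        refine Finset.sum_le_sum fun i hi => ?_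
        rw [sq]
        exact mul_le_mul_of_nonneg_left (Finset.single_le_sum hf hi) (hf i hi)
    _ = (∑ i ∈ s, f i) ^ 2 := by rw [← Finset.sum_mul, sq]

-- quadratic form bound by Frobenius norm
private lemma quad_le_frobenius {q : ℕ} (M : Fin q → Fin q → ℝ) (c : Fin q → ℝ) :
    ∑ j, c j * ∑ j', M j j' * c j'
      ≤ (∑ j, c j ^ 2) * Real.sqrt (∑ j, ∑ j', (M j j') ^ 2) := by
  set Q := ∑ j, c j * ∑ j', M j j' * c j' with hQ
  have h1 : Q ^ 2 ≤ (∑ j, c j ^ 2) * ∑ j, (∑ j', M j j' * c j') ^ 2 :=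
    Finset.sum_mul_sq_le_sq_mul_sq _ _ _
  have h2 : ∑ j, (∑ j', M j j' * c j') ^ 2
      ≤ ∑ j, (∑ j', (M j j') ^ 2) * (∑ j', c j' ^ 2) :=
    Finset.sum_le_sum fun j _ => Finset.sum_mul_sq_le_sq_mul_sq _ _ _
  have h3 : Q ^ 2 ≤ (∑ j, c j ^ 2) ^ 2 * (∑ j, ∑ j', (M j j') ^ 2) := by
    calc Q ^ 2 ≤ (∑ j, c j ^ 2) * ∑ j, (∑ j', (M j j') ^ 2) * (∑ j', c j' ^ 2) :=
          h1.trans (by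
            refine mul_le_mul_of_nonneg_left h2 ?_
            positivity)
      _ = (∑ j, c j ^ 2) ^ 2 * (∑ j, ∑ j', (M j j') ^ 2) := by
          rw [← Finset.sum_mul]; ring
  calc Q ≤ |Q| := le_abs_self _
    _ = Real.sqrt (Q ^ 2) := (Real.sqrt_sq_eq_abs Q).symm
    _ ≤ Real.sqrt ((∑ j, c j ^ 2) ^ 2 * (∑ j, ∑ j', (M j j') ^ 2)) := Real.sqrt_le_sqrt h3
    _ = (∑ j, c j ^ 2) * Real.sqrt (∑ j, ∑ j', (M j j') ^ 2) := by
        rw [Real.sqrt_mul (sq_nonneg _), Real.sqrt_sq (by positivity)]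
private lemma sum_pull {ι κ : Type*} [Fintype ι] [Fintype κ]
    (f : κ → ℝ) (g : ι → κ → ℝ) (h : ι → ℝ) :
    ∑ a, h a * ∑ j, f j * g a j = ∑ j, f j * ∑ a, h a * g a j := by
  simp only [Finset.mul_sum]
  rw [Finset.sum_comm]
  exact Finset.sum_congr rfl fun j _ => Finset.sum_congr rfl fun a _ => by ring

set_option maxHeartbeats 2000000 in
/-- if `λ_q > 0` and `V_0,…,V_{q−1}` is an α-realizable q-partition with
`α ∈ [0,1)`, then `λ_{q−1} ≤ (√(2q)/√(1−α²)) · avgrelout`. -/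
theorem stmt_4 (n q : ℕ) (hq1 : 1 ≤ q) (hqn : q < n)
    (A : Matrix (Fin n) (Fin n) ℝ)
    (hsymm : ∀ k l, A k l = A l k)
    (hnonneg : ∀ k l, 0 ≤ A k l)
    (hdiag : ∀ k, A k k = 0)
    (lam : Fin n → ℝ)
    (hmono : Monotone lam)
    (hlam0 : lam ⟨0, Nat.lt_of_le_of_lt (Nat.zero_le q) hqn⟩ = 0)
    (u : Fin n → Fin n → ℝ)
    (horth : ∀ i j : Fin n, (∑ a, u i a * u j a) = if i = j then (1 : ℝ) else 0)
    (heig : ∀ i : Fin n, (lap A).mulVec (u i) = lam i • u i)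
    (hlamq : 0 < lam ⟨q, hqn⟩)
    (α : ℝ) (hα0 : 0 ≤ α) (hα1 : α < 1)
    (V : Fin q → Finset (Fin n))
    (hne : ∀ j, (V j).Nonempty)
    (hdisj : ∀ j j' : Fin q, j ≠ j' → Disjoint (V j) (V j'))
    (hcover : ∀ i : Fin n, ∃ j : Fin q, i ∈ V j)
    (hreal : avgrelout A V ≤ α * lam ⟨q, hqn⟩ / Real.sqrt (2 * q)) :
    lam ⟨q - 1, Nat.lt_of_le_of_lt (Nat.sub_le q 1) hqn⟩
      ≤ (Real.sqrt (2 * q) / Real.sqrt (1 - α ^ 2)) * avgrelout A V := by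
  classical
  set L : Matrix (Fin n) (Fin n) ℝ := lap A with hLdef
  have hL : ∀ k l, L k l = L l k := by
    intro k l
    simp only [hLdef, lap, degMat, Matrix.sub_apply, Matrix.diagonal_apply]
    rw [hsymm k l]
    by_cases h : k = l
    · subst h; simp
    · simp [h, Ne.symm h]
  -- sizes
  have hNpos : ∀ j, (0:ℝ) < ((V j).card : ℝ) := by
    intro j
    exact_mod_cast Finset.card_pos.mpr (hne j)
  have hN1 : ∀ j, (1:ℝ) ≤ ((V j).card : ℝ) := by
    intro j
    exact_mod_cast Finset.card_pos.mpr (hne j)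
  set s : Fin q → ℝ := fun j => Real.sqrt ((V j).card) with hsdef
  have hspos : ∀ j, 0 < s j := fun j => Real.sqrt_pos.mpr (hNpos j)
  have hss : ∀ j, s j * s j = ((V j).card : ℝ) := fun j =>
    Real.mul_self_sqrt (le_of_lt (hNpos j))
  -- indicator vectors
  set χ : Fin q → Fin n → ℝ := fun j k => if k ∈ V j then (s j)⁻¹ else 0 with hχdef
  have hchi_sum : ∀ (j : Fin q) (g : Fin n → ℝ),
      ∑ k, χ j k * g k = (s j)⁻¹ * ∑ k ∈ V j, g k := by
    intro j g
    rw [Finset.mul_sum]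
    rw [← Finset.sum_subset (Finset.subset_univ (V j))
      (fun k _ hk => by simp [hχdef, hk])]
    refine Finset.sum_congr rfl fun k hk => by simp [hχdef, hk]
  -- partition sum decomposition
  have hpd : Set.PairwiseDisjoint ↑(Finset.univ : Finset (Fin q)) V := by
    intro j _ j' _ hjj'
    exact hdisj j j' hjj'
  have huniv : (Finset.univ : Finset (Fin n)) = Finset.univ.biUnion V := by
    ext k
    simp only [Finset.mem_univ, true_iff, Finset.mem_biUnion]
    obtain ⟨j, hj⟩ := hcover k
    exact ⟨j, by simp, hj⟩
  have hsum : ∀ f : Fin n → ℝ, ∑ k, f k = ∑ j, ∑ k ∈ V j, f k := by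
    intro f
    rw [show (∑ k, f k) = ∑ k ∈ Finset.univ.biUnion V, f k by rw [← huniv]]
    exact Finset.sum_biUnion hpd
  -- complement decomposition
  have hcompl_set : ∀ j : Fin q, (V j)ᶜ = (Finset.univ.erase j).biUnion V := by
    intro j
    ext l
    simp only [Finset.mem_compl, Finset.mem_biUnion, Finset.mem_erase, Finset.mem_univ,
      and_true]
    constructor
    · intro hl
      obtain ⟨j', hj'⟩ := hcover l
      refine ⟨j', fun h => hl (h ▸ hj'), hj'⟩
    · rintro ⟨j', hj'ne, hj'⟩ hl
      exact (Finset.disjoint_left.mp (hdisj j' j hj'ne) hj') hl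
  have hcompl : ∀ (j : Fin q) (g : Fin n → ℝ),
      ∑ l ∈ (V j)ᶜ, g l = ∑ j' ∈ Finset.univ.erase j, ∑ l ∈ V j', g l := by
    intro j g
    rw [hcompl_set j]
    exact Finset.sum_biUnion (hpd.subset (by simp))
  -- outgoing weights
  set out : Fin q → ℝ := fun j => ∑ k ∈ V j, ∑ l ∈ (V j)ᶜ, A k l with houtdef
  have hrel : ∀ j, relout A V j = (s j)⁻¹ * out j := by
    intro j; simp [relout, hsdef, houtdef]
  have hout_nonneg : ∀ j, 0 ≤ out j := fun j =>
    Finset.sum_nonneg fun k _ => Finset.sum_nonneg fun l _ => hnonneg k l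
  set w : Fin q → Fin q → ℝ := fun j j' => ∑ k ∈ V j, ∑ l ∈ V j', A k l with hwdef
  have hw_nonneg : ∀ j j', 0 ≤ w j j' := fun j j' =>
    Finset.sum_nonneg fun k _ => Finset.sum_nonneg fun l _ => hnonneg k l
  have hout_eq : ∀ j, out j = ∑ j' ∈ Finset.univ.erase j, w j j' := by
    intro j
    calc out j = ∑ k ∈ V j, ∑ j' ∈ Finset.univ.erase j, ∑ l ∈ V j', A k l :=
          Finset.sum_congr rfl fun k _ => hcompl j (A k)
      _ = ∑ j' ∈ Finset.univ.erase j, w j j' := Finset.sum_comm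
  -- the quotient matrix
  set M : Fin q → Fin q → ℝ := fun j j' => ∑ k, χ j k * ∑ l, L k l * χ j' l with hMdef
  have hM : ∀ j j', M j j' = (s j)⁻¹ * ((s j')⁻¹ * ∑ k ∈ V j, ∑ l ∈ V j', L k l) := by
    intro j j'
    rw [hMdef]
    dsimp only
    rw [hchi_sum j fun k => ∑ l, L k l * χ j' l]
    congr 1
    rw [Finset.mul_sum]
    refine Finset.sum_congr rfl fun k _ => ?_
    rw [show (∑ l, L k l * χ j' l) = ∑ l, χ j' l * L k l from by
      exact Finset.sum_congr rfl fun l _ => mul_comm _ _]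
    exact hchi_sum j' (L k)
  have hLdiag : ∀ j, ∑ k ∈ V j, ∑ l ∈ V j, L k l = out j := by
    intro j
    refine Finset.sum_congr rfl fun k hk => ?_
    have h1 : ∑ l ∈ V j, L k l = (∑ l ∈ V j, degMat A k l) - ∑ l ∈ V j, A k l := by
      simp [hLdef, lap, Finset.sum_sub_distrib]
    have h2 : ∑ l ∈ V j, degMat A k l = ∑ l, A k l := by
      simp only [degMat, Matrix.diagonal_apply]
      rw [Finset.sum_ite_eq (V j) k (fun _ => ∑ l, A k l)]
      simp [hk]
    rw [h1, h2, ← Finset.sum_add_sum_compl (V j) (A k)]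
    ring
  have hLoff : ∀ j j', j ≠ j' → ∑ k ∈ V j, ∑ l ∈ V j', L k l = -(w j j') := by
    intro j j' hjj'
    have key : ∀ k ∈ V j, ∀ l ∈ V j', L k l = -(A k l) := by
      intro k hk l hl
      have hkl : k ≠ l := fun h => (Finset.disjoint_left.mp (hdisj j j' hjj') hk) (h ▸ hl)
      simp [hLdef, lap, degMat, Matrix.diagonal_apply_ne _ hkl]
    calc ∑ k ∈ V j, ∑ l ∈ V j', L k l = ∑ k ∈ V j, ∑ l ∈ V j', -(A k l) :=
          Finset.sum_congr rfl fun k hk => Finset.sum_congr rfl fun l hl => key k hk l hl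
      _ = -(w j j') := by rw [hwdef]; simp
  have hMdiag : ∀ j, M j j = (((V j).card : ℝ))⁻¹ * out j := by
    intro j
    rw [hM j j, hLdiag j, ← mul_assoc, ← mul_inv, hss j]
  have hMoff : ∀ j j', j ≠ j' → M j j' = -((s j)⁻¹ * (s j')⁻¹ * w j j') := by
    intro j j' h
    rw [hM j j', hLoff j j' h]
    ring
  have hsq_inv : ∀ j, ((s j)⁻¹)^2 = (((V j).card : ℝ))⁻¹ := by
    intro j
    rw [sq, ← mul_inv, hss j]
  have hrelsq : ∀ j, (relout A V j)^2 = (((V j).card : ℝ))⁻¹ * out j ^ 2 := by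
    intro j
    rw [hrel j, mul_pow, hsq_inv j]
  -- Frobenius norm bound
  have hFrob : ∑ j, ∑ j', (M j j')^2 ≤ 2 * ∑ j, (relout A V j)^2 := by
    rw [Finset.mul_sum]
    refine Finset.sum_le_sum fun j _ => ?_
    rw [← Finset.add_sum_erase _ (fun j' => (M j j')^2) (Finset.mem_univ j)]
    have hbd1 : M j j ^ 2 ≤ (relout A V j)^2 := by
      rw [hMdiag j, hrelsq j, mul_pow]
      refine mul_le_mul_of_nonneg_right ?_ (sq_nonneg _)
      have h01 : (((V j).card : ℝ))⁻¹ ≤ 1 := inv_le_one_of_one_le₀ (hN1 j)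
      have h00 : (0:ℝ) ≤ (((V j).card : ℝ))⁻¹ := by positivity
      nlinarith
    have hbd2 : ∑ j' ∈ Finset.univ.erase j, (M j j')^2 ≤ (relout A V j)^2 := by
      have step1 : ∀ j' ∈ Finset.univ.erase j,
          (M j j')^2 ≤ (((V j).card : ℝ))⁻¹ * (w j j')^2 := by
        intro j' hj'
        have hne' : j ≠ j' := fun h => (Finset.mem_erase.mp hj').1 h.symm
        rw [hMoff j j' hne', neg_sq, mul_pow, mul_pow, hsq_inv j, hsq_inv j']
        have h01 : (((V j').card : ℝ))⁻¹ ≤ 1 := inv_le_one_of_one_le₀ (hN1 j')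
        have h02 : (0:ℝ) ≤ (((V j).card : ℝ))⁻¹ := by positivity
        exact mul_le_mul_of_nonneg_right (mul_le_of_le_one_right h02 h01) (sq_nonneg _)
      calc ∑ j' ∈ Finset.univ.erase j, (M j j')^2
          ≤ ∑ j' ∈ Finset.univ.erase j, (((V j).card : ℝ))⁻¹ * (w j j')^2 :=
            Finset.sum_le_sum step1
        _ = (((V j).card : ℝ))⁻¹ * ∑ j' ∈ Finset.univ.erase j, (w j j')^2 := by
            rw [Finset.mul_sum]
        _ ≤ (((V j).card : ℝ))⁻¹ * (∑ j' ∈ Finset.univ.erase j, w j j')^2 := by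
            refine mul_le_mul_of_nonneg_left
              (sum_sq_le_sq_sum' _ _ fun j' _ => hw_nonneg j j') (by positivity)
        _ = (relout A V j)^2 := by rw [← hout_eq j, hrelsq j]
    linarith
  -- column orthogonality of u
  have hUtU : ∀ a b : Fin n, ∑ i, u i a * u i b = if a = b then (1:ℝ) else 0 := by
    have hUU : (Matrix.of u) * (Matrix.of u)ᵀ = 1 := by
      ext i j
      simp only [Matrix.mul_apply, Matrix.transpose_apply, Matrix.of_apply, Matrix.one_apply]
      exact horth i j
    have h2 : (Matrix.of u)ᵀ * (Matrix.of u) = 1 := mul_eq_one_comm.mp hUU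
    intro a b
    have := Matrix.ext_iff.mpr h2 a b
    simpa [Matrix.mul_apply, Matrix.transpose_apply, Matrix.one_apply] using this
  -- find c in the kernel of the constraint matrix
  have hq1n : q - 1 < n := Nat.lt_of_le_of_lt (Nat.sub_le q 1) hqn
  set B : Matrix (Fin (q-1)) (Fin q) ℝ :=
    fun i j => ∑ a, u (Fin.castLE (le_of_lt hq1n) i) a * χ j a with hBdef
  obtain ⟨c, hc_mem, hc_ne⟩ : ∃ c, c ∈ LinearMap.ker B.mulVecLin ∧ c ≠ 0 := by
    have hlt : Module.finrank ℝ (Fin (q-1) → ℝ) < Module.finrank ℝ (Fin q → ℝ) := by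
      simp only [Module.finrank_fintype_fun_eq_card, Fintype.card_fin]
      omega
    have hker := LinearMap.ker_ne_bot_of_finrank_lt (f := B.mulVecLin) hlt
    exact (Submodule.ne_bot_iff _).mp hker
  set x : Fin n → ℝ := fun a => ∑ j, c j * χ j a with hxdef
  set d : Fin n → ℝ := fun i => ∑ a, x a * u i a with hddef
  have hd0 : ∀ i : Fin n, (i : ℕ) < q - 1 → d i = 0 := by
    intro i hi
    have hBc : B.mulVec c = 0 := by
      have h := LinearMap.mem_ker.mp hc_mem
      rwa [Matrix.mulVecLin_apply] at h
    have h0 : B.mulVec c ⟨i.1, hi⟩ = 0 := by rw [hBc]; rfl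
    have hcast : Fin.castLE (le_of_lt hq1n) (⟨i.1, hi⟩ : Fin (q-1)) = i :=
      Fin.ext (by simp)
    calc d i = ∑ a, u i a * x a := Finset.sum_congr rfl fun a _ => mul_comm _ _
      _ = ∑ a, u i a * ∑ j, c j * χ j a := rfl
      _ = ∑ j, c j * ∑ a, u i a * χ j a := sum_pull c (fun a j => χ j a) (u i)
      _ = ∑ j, B ⟨i.1, hi⟩ j * c j := by
          refine Finset.sum_congr rfl fun j _ => ?_
          rw [hBdef]
          dsimp only
          rw [hcast, mul_comm]
      _ = B.mulVec c ⟨i.1, hi⟩ := by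
          simp [Matrix.mulVec, dotProduct]
      _ = 0 := h0
  -- expansion of x in the eigenbasis
  have hx_exp : ∀ a, x a = ∑ i, d i * u i a := by
    intro a
    symm
    calc ∑ i, d i * u i a = ∑ i, u i a * ∑ b, x b * u i b :=
          Finset.sum_congr rfl fun i _ => by rw [hddef]; ring
      _ = ∑ b, x b * ∑ i, u i a * u i b := sum_pull x (fun i b => u i b) (fun i => u i a)
      _ = x a := by
          simp only [hUtU]
          rw [Finset.sum_congr rfl (fun b _ => by
            rw [show (if a = b then (1:ℝ) else 0) = (if b = a then (1:ℝ) else 0) from by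
              by_cases h : a = b <;> simp [h, Ne.symm, eq_comm]])]
          simp [mul_ite]
  have hParseval : ∑ i, d i ^ 2 = ∑ a, x a ^ 2 := by
    calc ∑ i, d i ^ 2 = ∑ i, d i * ∑ a, x a * u i a :=
          Finset.sum_congr rfl fun i _ => by rw [sq]
      _ = ∑ a, x a * ∑ i, d i * u i a := sum_pull x (fun i a => u i a) d
      _ = ∑ a, x a ^ 2 := Finset.sum_congr rfl fun a _ => by rw [← hx_exp a, sq]
  -- the quadratic form
  set Q : ℝ := ∑ a, x a * ∑ b, L a b * x b with hQdef
  have hLu : ∀ (i : Fin n) (b : Fin n), ∑ a, L b a * u i a = lam i * u i b := by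
    intro i b
    have h := congrFun (heig i) b
    simpa [Matrix.mulVec, dotProduct] using h
  have hQ1 : Q = ∑ i, lam i * d i ^ 2 := by
    calc Q = ∑ a, (∑ i, d i * u i a) * ∑ b, L a b * x b :=
          Finset.sum_congr rfl fun a _ => by rw [← hx_exp a]
      _ = ∑ a, (∑ b, L a b * x b) * ∑ i, d i * u i a :=
          Finset.sum_congr rfl fun a _ => mul_comm _ _
      _ = ∑ i, d i * ∑ a, (∑ b, L a b * x b) * u i a :=
          sum_pull d (fun a i => u i a) (fun a => ∑ b, L a b * x b)
      _ = ∑ i, d i * (lam i * d i) := by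
          refine Finset.sum_congr rfl fun i _ => ?_
          congr 1
          calc ∑ a, (∑ b, L a b * x b) * u i a
              = ∑ a, u i a * ∑ b, x b * L a b := by
                refine Finset.sum_congr rfl fun a _ => ?_
                rw [mul_comm]
                congr 1
                exact Finset.sum_congr rfl fun b _ => mul_comm _ _
            _ = ∑ b, x b * ∑ a, u i a * L a b :=
                sum_pull x (fun a b => L a b) (fun a => u i a)
            _ = ∑ b, x b * (lam i * u i b) := by
                refine Finset.sum_congr rfl fun b _ => ?_
                congr 1
                rw [← hLu i b]
                exact Finset.sum_congr rfl fun a _ => by rw [hL b a]; ring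
            _ = lam i * d i := by
                rw [hddef, Finset.mul_sum]
                exact Finset.sum_congr rfl fun b _ => by ring
      _ = ∑ i, lam i * d i ^ 2 := Finset.sum_congr rfl fun i _ => by ring
  have hQ2 : Q = ∑ j, c j * ∑ j', M j j' * c j' := by
    calc Q = ∑ a, (∑ b, L a b * x b) * ∑ j, c j * χ j a :=
          Finset.sum_congr rfl fun a _ => mul_comm _ _
      _ = ∑ j, c j * ∑ a, (∑ b, L a b * x b) * χ j a :=
          sum_pull c (fun a j => χ j a) (fun a => ∑ b, L a b * x b)
      _ = ∑ j, c j * ∑ j', M j j' * c j' := by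
          refine Finset.sum_congr rfl fun j _ => ?_
          congr 1
          calc ∑ a, (∑ b, L a b * x b) * χ j a
              = ∑ a, χ j a * ∑ b, L a b * x b :=
                Finset.sum_congr rfl fun a _ => mul_comm _ _
            _ = ∑ a, χ j a * ∑ j', c j' * ∑ b, L a b * χ j' b := by
                refine Finset.sum_congr rfl fun a _ => ?_
                congr 1
                calc ∑ b, L a b * x b = ∑ b, L a b * ∑ j', c j' * χ j' b := rfl
                  _ = ∑ j', c j' * ∑ b, L a b * χ j' b :=
                      sum_pull c (fun b j' => χ j' b) (fun b => L a b)
            _ = ∑ j', c j' * ∑ a, χ j a * ∑ b, L a b * χ j' b :=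
                sum_pull c (fun a j' => ∑ b, L a b * χ j' b) (χ j)
            _ = ∑ j', M j j' * c j' := by
                refine Finset.sum_congr rfl fun j' _ => ?_
                rw [hMdef]
                ring
  -- the norm of x
  have hxsq : ∑ a, x a ^ 2 = ∑ j, c j ^ 2 := by
    rw [hsum (fun a => x a ^ 2)]
    refine Finset.sum_congr rfl fun j _ => ?_
    have hxa : ∀ a ∈ V j, x a = c j * (s j)⁻¹ := by
      intro a ha
      rw [hxdef]
      dsimp only
      rw [Finset.sum_eq_single j]
      · simp [hχdef, ha]
      · intro j' _ hj'
        have hna : a ∉ V j' := fun h => (Finset.disjoint_left.mp (hdisj j' j hj') h) ha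
        simp [hχdef, hna]
      · simp
    rw [Finset.sum_congr rfl fun a ha => by rw [hxa a ha]]
    rw [Finset.sum_const, nsmul_eq_mul, mul_pow, hsq_inv j]
    rw [mul_comm (c j ^ 2), ← mul_assoc, mul_inv_cancel₀ (ne_of_gt (hNpos j)), one_mul]
  -- lower bound for Q
  set qm1 : Fin n := ⟨q - 1, Nat.lt_of_le_of_lt (Nat.sub_le q 1) hqn⟩ with hqm1
  have hlow : lam qm1 * ∑ j, c j ^ 2 ≤ Q := by
    calc lam qm1 * ∑ j, c j ^ 2 = lam qm1 * ∑ i, d i ^ 2 := by rw [hParseval, hxsq]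
      _ = ∑ i, lam qm1 * d i ^ 2 := Finset.mul_sum _ _ _
      _ ≤ ∑ i, lam i * d i ^ 2 := by
          refine Finset.sum_le_sum fun i _ => ?_
          by_cases hi : (i : ℕ) < q - 1
          · rw [hd0 i hi]; simp
          · exact mul_le_mul_of_nonneg_right
              (hmono (Fin.le_def.mpr (by simp [hqm1]; omega))) (sq_nonneg _)
      _ = Q := hQ1.symm
  -- upper bound for Q
  have hup : Q ≤ (∑ j, c j ^ 2) * Real.sqrt (∑ j, ∑ j', (M j j') ^ 2) := by
    rw [hQ2]
    exact quad_le_frobenius M c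
  have hcpos : 0 < ∑ j, c j ^ 2 := by
    obtain ⟨j0, hj0⟩ : ∃ j0, c j0 ≠ 0 := by
      by_contra h
      push_neg at h
      exact hc_ne (funext fun j => h j)
    exact Finset.sum_pos' (fun j _ => sq_nonneg _) ⟨j0, Finset.mem_univ _, by positivity⟩
  have hkey : lam qm1 ≤ Real.sqrt (∑ j, ∑ j', (M j j') ^ 2) := by
    have h := hlow.trans hup
    rw [mul_comm (∑ j, c j ^ 2)] at h
    exact le_of_mul_le_mul_right h hcpos
  -- identify with avgrelout
  have hqR : (0:ℝ) < (q:ℝ) := by exact_mod_cast Nat.lt_of_lt_of_le Nat.zero_lt_one hq1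
  have hsqrtM : Real.sqrt (∑ j, ∑ j', (M j j') ^ 2) ≤ Real.sqrt (2*q) * avgrelout A V := by
    have h2 : Real.sqrt (2*q) * avgrelout A V
        = Real.sqrt (2 * ∑ j, (relout A V j) ^ 2) := by
      rw [avgrelout, ← Real.sqrt_mul (by positivity)]
      congr 1
      field_simp
    rw [h2]
    exact Real.sqrt_le_sqrt hFrob
  have havg_nonneg : 0 ≤ avgrelout A V := Real.sqrt_nonneg _
  have hfinal1 : lam qm1 ≤ Real.sqrt (2*q) * avgrelout A V := hkey.trans hsqrtM
  have hden : 0 < Real.sqrt (1 - α ^ 2) := Real.sqrt_pos.mpr (by nlinarith)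
  have hfrac : Real.sqrt (2*q) ≤ Real.sqrt (2*q) / Real.sqrt (1 - α ^ 2) := by
    rw [le_div_iff₀ hden]
    have hle1 : Real.sqrt (1 - α ^ 2) ≤ 1 :=
      (Real.sqrt_le_sqrt (by nlinarith)).trans_eq Real.sqrt_one
    nlinarith [Real.sqrt_nonneg (2*(q:ℝ))]
  calc lam qm1 ≤ Real.sqrt (2*q) * avgrelout A V := hfinal1
    _ ≤ (Real.sqrt (2*q) / Real.sqrt (1 - α ^ 2)) * avgrelout A V :=
        mul_le_mul_of_nonneg_right hfrac havg_nonneg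
end

section
/- Let {u_0, …, u_{n−1}} and {ū_0, …, ū_{n−1}} be two orthonormal bases of ℝⁿ and let 1 ≤ q ≤ n−1. Set P = ∑_{l=0}^{q−1} u_l u_lᵀ and Q = ∑_{j=0}^{q−1} ū_j ū_jᵀ. Then ‖P − Q‖_F² = ∑_{j=0}^{q−1} ∑_{l=q}^{n−1} ( (ū_lᵀ u_j)² + (ū_jᵀ u_l)² ), where ‖·‖_F is the Frobenius norm. -/
open Finset

private lemma key5 {n : ℕ} (S T : Finset (Fin n)) (f g : Fin n → Fin n → ℝ) :
    (∑ a : Fin n, ∑ b : Fin n, (∑ l ∈ S, f l a * f l b) * (∑ m ∈ T, g m a * g m b))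
    = ∑ l ∈ S, ∑ m ∈ T, (∑ a, f l a * g m a) * (∑ b, f l b * g m b) := by
  calc ∑ a : Fin n, ∑ b : Fin n, (∑ l ∈ S, f l a * f l b) * (∑ m ∈ T, g m a * g m b)
      = ∑ a : Fin n, ∑ b : Fin n, ∑ p ∈ S ×ˢ T, (f p.1 a * f p.1 b) * (g p.2 a * g p.2 b) := by
        simp_rw [Finset.sum_mul_sum, Finset.sum_product]
    _ = ∑ a : Fin n, ∑ p ∈ S ×ˢ T, ∑ b : Fin n, (f p.1 a * f p.1 b) * (g p.2 a * g p.2 b) :=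
        Finset.sum_congr rfl fun a _ => Finset.sum_comm
    _ = ∑ p ∈ S ×ˢ T, ∑ a : Fin n, ∑ b : Fin n, (f p.1 a * f p.1 b) * (g p.2 a * g p.2 b) :=
        Finset.sum_comm
    _ = ∑ p ∈ S ×ˢ T, (∑ a, f p.1 a * g p.2 a) * (∑ b, f p.1 b * g p.2 b) := by
        refine Finset.sum_congr rfl fun p _ => ?_
        rw [Finset.sum_mul_sum]
        exact Finset.sum_congr rfl fun a _ => Finset.sum_congr rfl fun b _ => by ring
    _ = ∑ l ∈ S, ∑ m ∈ T, (∑ a, f l a * g m a) * (∑ b, f l b * g m b) := by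
        rw [Finset.sum_product]

private lemma colorth5 {n : ℕ} (v : Fin n → Fin n → ℝ)
    (hv : ∀ i j : Fin n, (∑ a, v i a * v j a) = if i = j then (1:ℝ) else 0) :
    ∀ a b : Fin n, (∑ i, v i a * v i b) = if a = b then (1:ℝ) else 0 := by
  have h1 : (Matrix.of v) * (Matrix.of v).transpose = 1 := by
    ext i j
    simpa [Matrix.mul_apply, Matrix.one_apply] using hv i j
  have h2 : (Matrix.of v).transpose * (Matrix.of v) = 1 := mul_eq_one_comm.mp h1
  intro a b
  have := congrFun (congrFun h2 a) b
  simpa [Matrix.mul_apply, Matrix.one_apply] using this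

private lemma complete5 {n : ℕ} (u v : Fin n → Fin n → ℝ)
    (hu : ∀ i j : Fin n, (∑ a, u i a * u j a) = if i = j then (1:ℝ) else 0)
    (hv : ∀ i j : Fin n, (∑ a, v i a * v j a) = if i = j then (1:ℝ) else 0)
    (j : Fin n) :
    ∑ l, (∑ a, v l a * u j a)^2 = 1 := by
  have hcol := colorth5 v hv
  have hk := key5 (Finset.univ : Finset (Fin n)) ({j} : Finset (Fin n)) v u
  simp only [Finset.sum_singleton] at hk
  calc ∑ l, (∑ a, v l a * u j a)^2
      = ∑ l : Fin n, (∑ a, v l a * u j a) * (∑ b, v l b * u j b) := by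
        simp_rw [sq]
    _ = ∑ a : Fin n, ∑ b : Fin n, (∑ l, v l a * v l b) * (u j a * u j b) := hk.symm
    _ = ∑ a : Fin n, u j a * u j a := by
        simp_rw [hcol, ite_mul, one_mul, zero_mul, Finset.sum_ite_eq, Finset.mem_univ, if_true]
    _ = 1 := by simpa using hu j j

/-- For two orthonormal bases `u` and `v` of ℝⁿ and `1 ≤ q ≤ n-1`,
with `P = ∑_{l<q} u_l u_lᵀ` and `Q = ∑_{j<q} v_j v_jᵀ`,
`‖P − Q‖_F² = ∑_{j<q} ∑_{l≥q} ((v_lᵀ u_j)² + (v_jᵀ u_l)²)`. -/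
theorem stmt_5 (n q : ℕ) (hq1 : 1 ≤ q) (hqn : q ≤ n - 1)
    (u v : Fin n → Fin n → ℝ)
    (hu : ∀ i j : Fin n, (∑ a, u i a * u j a) = if i = j then (1 : ℝ) else 0)
    (hv : ∀ i j : Fin n, (∑ a, v i a * v j a) = if i = j then (1 : ℝ) else 0)
    (P Q : Matrix (Fin n) (Fin n) ℝ)
    (hP : ∀ a b, P a b = ∑ l ∈ Finset.univ.filter (fun l : Fin n => (l : ℕ) < q),
      u l a * u l b)
    (hQ : ∀ a b, Q a b = ∑ j ∈ Finset.univ.filter (fun j : Fin n => (j : ℕ) < q),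
      v j a * v j b) :
    (∑ a, ∑ b, (P a b - Q a b) ^ 2)
      = ∑ j ∈ Finset.univ.filter (fun j : Fin n => (j : ℕ) < q),
          ∑ l ∈ Finset.univ.filter (fun l : Fin n => q ≤ (l : ℕ)),
            ((∑ a, v l a * u j a) ^ 2 + (∑ a, v j a * u l a) ^ 2) := by
  set A : Finset (Fin n) := Finset.univ.filter (fun l : Fin n => (l : ℕ) < q) with hA
  set B : Finset (Fin n) := Finset.univ.filter (fun l : Fin n => q ≤ (l : ℕ)) with hB
  -- splitting univ into A and B
  have hsplit : ∀ f : Fin n → ℝ, ∑ l ∈ B, f l = (∑ l, f l) - ∑ l ∈ A, f l := by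
    intro f
    have h1 := Finset.sum_filter_add_sum_filter_not Finset.univ
      (fun l : Fin n => (l : ℕ) < q) f
    have h2 : Finset.univ.filter (fun l : Fin n => ¬ (l : ℕ) < q) = B := by
      simp [hB, not_lt]
    rw [h2] at h1
    linarith
  -- the cross term
  set X : ℝ := ∑ l ∈ A, ∑ m ∈ A, (∑ a, u l a * v m a)^2 with hX
  have hPP : (∑ a, ∑ b, P a b * P a b) = (A.card : ℝ) := by
    simp_rw [hP]
    rw [key5 A A u u]
    simp_rw [hu]
    rw [Finset.sum_congr rfl (fun l hl => by
      rw [Finset.sum_congr rfl (fun m _ => by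
        by_cases h : l = m <;> simp [h] : ∀ m ∈ A, (if l = m then (1:ℝ) else 0) * (if l = m then 1 else 0) = if l = m then 1 else 0),
        Finset.sum_ite_eq, if_pos hl])]
    simp
  have hQQ : (∑ a, ∑ b, Q a b * Q a b) = (A.card : ℝ) := by
    simp_rw [hQ]
    rw [key5 A A v v]
    simp_rw [hv]
    rw [Finset.sum_congr rfl (fun l hl => by
      rw [Finset.sum_congr rfl (fun m _ => by
        by_cases h : l = m <;> simp [h] : ∀ m ∈ A, (if l = m then (1:ℝ) else 0) * (if l = m then 1 else 0) = if l = m then 1 else 0),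
        Finset.sum_ite_eq, if_pos hl])]
    simp
  have hPQ : (∑ a, ∑ b, P a b * Q a b) = X := by
    simp_rw [hP, hQ]
    rw [key5 A A u v, hX]
    exact Finset.sum_congr rfl fun l _ => Finset.sum_congr rfl fun m _ => (sq _).symm
  have hexp : ∀ a b : Fin n, (P a b - Q a b)^2
      = P a b * P a b - 2 * (P a b * Q a b) + Q a b * Q a b := fun a b => by ring
  have hLHS : (∑ a, ∑ b, (P a b - Q a b) ^ 2) = (A.card : ℝ) - 2 * X + (A.card : ℝ) := by
    simp_rw [hexp, Finset.sum_add_distrib, Finset.sum_sub_distrib, ← Finset.mul_sum]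
    rw [hPP, hQQ, hPQ]
  rw [hLHS]
  -- now the RHS
  have hRj : ∀ j ∈ A,
      (∑ l ∈ B, ((∑ a, v l a * u j a) ^ 2 + (∑ a, v j a * u l a) ^ 2))
      = (1 - ∑ l ∈ A, (∑ a, v l a * u j a)^2) + (1 - ∑ l ∈ A, (∑ a, v j a * u l a)^2) := by
    intro j _
    rw [Finset.sum_add_distrib, hsplit, hsplit, complete5 u v hu hv j]
    have h2 : (∑ l, (∑ a, v j a * u l a)^2) = 1 := by
      have := complete5 v u hv hu j
      simpa [mul_comm] using this
    rw [h2]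
  rw [Finset.sum_congr rfl hRj]
  have hY : (∑ j ∈ A, ∑ l ∈ A, (∑ a, v l a * u j a)^2) = X := by
    rw [hX]
    exact Finset.sum_congr rfl fun j _ => Finset.sum_congr rfl fun l _ =>
      congrArg (· ^ 2) (Finset.sum_congr rfl fun a _ => mul_comm _ _)
  have hZ : (∑ j ∈ A, ∑ l ∈ A, (∑ a, v j a * u l a)^2) = X := by
    rw [hX, Finset.sum_comm]
    exact Finset.sum_congr rfl fun l _ => Finset.sum_congr rfl fun j _ =>
      congrArg (· ^ 2) (Finset.sum_congr rfl fun a _ => mul_comm _ _)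
  simp_rw [Finset.sum_add_distrib, Finset.sum_sub_distrib, Finset.sum_const, nsmul_eq_mul,
    mul_one]
  rw [hY, hZ]
  ring
end

section
/- If λ_q > 0 and V_0, …, V_{q−1} is an α-realizable q-partition of G, then ‖Ŭ Ŭᵀ − Ū Ūᵀ‖_F² ≤ 2α², where Ŭ = [u_0 ⋯ u_{q−1}], Ū = [ū_0 ⋯ ū_{q−1}], and ‖·‖_F is the Frobenius norm. -/
open Matrix

/-!
Write `P = Ŭ Ŭᵀ` and `Q = Ū Ūᵀ`. Both are orthogonal projections of rank `q`, so
`‖P - Q‖_F² = 2q - 2⟨P, Q⟩_F`, and by Parseval in the eigenbasis this is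
`2 ∑_j ∑_{i ≥ q} ⟨u_i, ū_j⟩²`, twice the mass of the `ū_j` outside the bottom `q` eigenvectors.
There `L` has eigenvalues at least `λ_q`, so `λ_q² ∑_{i ≥ q} ⟨u_i, ū_j⟩² ≤ ‖L ū_j‖²`.
The entries of `L ū_j` are `|V_j|^{-1/2}` times the weight from each vertex across the cut of
`V_j`; since a sum of squares of nonnegative numbers is at most the square of the sum, and the
cut is seen once from each side, `‖L ū_j‖² ≤ 2 relout(V_j)²`. Realizability bounds
`∑_j relout(V_j)²` by `α² λ_q² / 2`.
-/

open Finset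

section Orthonormal

variable {m : Type*} [Fintype m]

theorem sum_sum_outer_mul_outer {ι κ : Type*} (s : Finset ι) (t : Finset κ)
    (f : ι → m → ℝ) (g : κ → m → ℝ) :
    ∑ a, ∑ b, (∑ i ∈ s, f i a * f i b) * (∑ j ∈ t, g j a * g j b) =
      ∑ i ∈ s, ∑ j ∈ t, (f i ⬝ᵥ g j) ^ 2 := by
  simp_rw [sq, dotProduct, sum_mul_sum, sum_comm (s := (univ : Finset m)) (t := s),
    sum_comm (s := (univ : Finset m)) (t := t), mul_mul_mul_comm]

theorem sum_sum_sq_dotProduct_of_orthonormal {ι : Type*} [DecidableEq ι] {f : ι → m → ℝ}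
    (hf : ∀ i j, f i ⬝ᵥ f j = if i = j then 1 else 0) (s : Finset ι) :
    ∑ i ∈ s, ∑ j ∈ s, (f i ⬝ᵥ f j) ^ 2 = #s := by
  simp [hf]

theorem sum_sq_dotProduct_of_orthonormal [DecidableEq m] {u : m → m → ℝ}
    (hu : ∀ i j, u i ⬝ᵥ u j = if i = j then 1 else 0) (x : m → ℝ) :
    ∑ i, (u i ⬝ᵥ x) ^ 2 = ∑ k, x k ^ 2 := by
  have hrows : of u * (of u)ᵀ = 1 := by
    ext i j
    simpa [mul_apply, one_apply, dotProduct] using hu i j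
  have hcols : (of u)ᵀ * of u = 1 := mul_eq_one_comm.mp hrows
  calc ∑ i, (u i ⬝ᵥ x) ^ 2 = (of u *ᵥ x) ⬝ᵥ (of u *ᵥ x) := by
        simp [dotProduct, mulVec, sq]
    _ = x ⬝ᵥ x := by
        rw [dotProduct_mulVec, ← vecMul_transpose, vecMul_vecMul, hcols, vecMul_one]
    _ = ∑ k, x k ^ 2 := by simp [dotProduct, sq]

theorem sum_sq_sub_projections [DecidableEq m] {κ : Type*} [Fintype κ] [DecidableEq κ]
    {u : m → m → ℝ} (hu : ∀ i j, u i ⬝ᵥ u j = if i = j then 1 else 0)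
    {g : κ → m → ℝ} (hg : ∀ j j', g j ⬝ᵥ g j' = if j = j' then 1 else 0)
    {s : Finset m} (hs : #s = Fintype.card κ) :
    ∑ a, ∑ b, ((∑ i ∈ s, u i a * u i b) - ∑ j, g j a * g j b) ^ 2 =
      2 * ∑ j, ∑ i ∈ sᶜ, (u i ⬝ᵥ g j) ^ 2 := by
  have hsplit : ∀ j, ∑ i ∈ s, (u i ⬝ᵥ g j) ^ 2 = 1 - ∑ i ∈ sᶜ, (u i ⬝ᵥ g j) ^ 2 := by
    intro j
    rw [eq_sub_iff_add_eq, sum_add_sum_compl, sum_sq_dotProduct_of_orthonormal hu]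
    simpa [dotProduct, sq] using hg j j
  have hexpand : ∀ P Q : ℝ, (P - Q) ^ 2 = P * P - 2 * (P * Q) + Q * Q := fun _ _ => by ring
  simp_rw [hexpand, sum_add_distrib, sum_sub_distrib, ← mul_sum, sum_sum_outer_mul_outer,
    sum_sum_sq_dotProduct_of_orthonormal hu, sum_sum_sq_dotProduct_of_orthonormal hg,
    sum_comm (s := s), hsplit, sum_sub_distrib, hs, sum_const, card_univ, nsmul_eq_mul, mul_one]
  ring

end Orthonormal

section Spectral

variable {m : Type*} [Fintype m]

theorem dotProduct_mulVec_eigenvector {L : Matrix m m ℝ} (hL : L.IsSymm) {v : m → ℝ} {μ : ℝ}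
    (hv : L *ᵥ v = μ • v) (x : m → ℝ) : v ⬝ᵥ (L *ᵥ x) = μ * (v ⬝ᵥ x) := by
  rw [dotProduct_mulVec, ← mulVec_transpose, hL.eq, hv, smul_dotProduct, smul_eq_mul]

theorem sq_mul_sum_sq_dotProduct_le [DecidableEq m] {L : Matrix m m ℝ} (hL : L.IsSymm)
    {u : m → m → ℝ} (hu : ∀ i j, u i ⬝ᵥ u j = if i = j then 1 else 0) {lam : m → ℝ}
    (heig : ∀ i, L *ᵥ u i = lam i • u i) {μ : ℝ} (hμ : 0 ≤ μ) {s : Finset m}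
    (hs : ∀ i ∈ s, μ ≤ lam i) (x : m → ℝ) :
    μ ^ 2 * ∑ i ∈ s, (u i ⬝ᵥ x) ^ 2 ≤ ∑ k, (L *ᵥ x) k ^ 2 :=
  calc μ ^ 2 * ∑ i ∈ s, (u i ⬝ᵥ x) ^ 2 = ∑ i ∈ s, μ ^ 2 * (u i ⬝ᵥ x) ^ 2 := mul_sum _ _ _
    _ ≤ ∑ i ∈ s, lam i ^ 2 * (u i ⬝ᵥ x) ^ 2 := by
        gcongr with i hi
        exact hs i hi
    _ ≤ ∑ i, lam i ^ 2 * (u i ⬝ᵥ x) ^ 2 :=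
        sum_le_sum_of_subset_of_nonneg (subset_univ s) fun _ _ _ => by positivity
    _ = ∑ k, (L *ᵥ x) k ^ 2 := by
        simp_rw [← mul_pow, ← dotProduct_mulVec_eigenvector hL (heig _),
          sum_sq_dotProduct_of_orthonormal hu]

end Spectral

section Laplacian

variable {n : ℕ} {A : Matrix (Fin n) (Fin n) ℝ}

theorem lap_isSymm (hA : A.IsSymm) : (lap A).IsSymm :=
  (isSymm_diagonal _).sub hA

theorem lap_mulVec_apply (x : Fin n → ℝ) (k : Fin n) :
    (lap A *ᵥ x) k = ∑ l, A k l * (x k - x l) := by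
  rw [lap, degMat, sub_mulVec, Pi.sub_apply, mulVec_diagonal]
  simp [mulVec, dotProduct, mul_sub, mul_sum, mul_comm]

theorem lap_mulVec_indicator (T : Finset (Fin n)) (r : ℝ) (k : Fin n) :
    (lap A *ᵥ fun i => if i ∈ T then r else 0) k =
      if k ∈ T then r * ∑ l ∈ Tᶜ, A k l else -(r * ∑ l ∈ T, A k l) := by
  rw [lap_mulVec_apply]
  split_ifs with hk
  · simp [mul_sub, mul_ite, sum_sub_distrib, sum_ite_mem, ← sum_add_sum_compl T, mul_sum,
      mul_comm, inter_comm Tᶜ, inter_compl]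
  · simp [mul_ite, sum_ite_mem, mul_sum, mul_comm]

theorem sum_sq_lap_mulVec_indicator_le (hA : A.IsSymm) (hnonneg : ∀ k l, 0 ≤ A k l)
    (T : Finset (Fin n)) (r : ℝ) :
    ∑ k, (lap A *ᵥ fun i => if i ∈ T then r else 0) k ^ 2 ≤
      2 * (r * ∑ k ∈ T, ∑ l ∈ Tᶜ, A k l) ^ 2 := by
  have hout : ∑ k ∈ T, (∑ l ∈ Tᶜ, A k l) ^ 2 ≤ (∑ k ∈ T, ∑ l ∈ Tᶜ, A k l) ^ 2 :=
    sum_sq_le_sq_sum_of_nonneg fun k _ => sum_nonneg fun l _ => hnonneg k l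
  have hin : ∑ k ∈ Tᶜ, (∑ l ∈ T, A k l) ^ 2 ≤ (∑ k ∈ T, ∑ l ∈ Tᶜ, A k l) ^ 2 := by
    calc ∑ k ∈ Tᶜ, (∑ l ∈ T, A k l) ^ 2 ≤ (∑ k ∈ Tᶜ, ∑ l ∈ T, A k l) ^ 2 :=
          sum_sq_le_sq_sum_of_nonneg fun k _ => sum_nonneg fun l _ => hnonneg k l
      _ = (∑ k ∈ T, ∑ l ∈ Tᶜ, A k l) ^ 2 := by
          rw [sum_comm.trans (sum_congr rfl fun _ _ => sum_congr rfl fun _ _ => hA.apply _ _)]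
  calc ∑ k, (lap A *ᵥ fun i => if i ∈ T then r else 0) k ^ 2
      = r ^ 2 * ∑ k ∈ T, (∑ l ∈ Tᶜ, A k l) ^ 2 + r ^ 2 * ∑ k ∈ Tᶜ, (∑ l ∈ T, A k l) ^ 2 := by
        rw [← sum_add_sum_compl T, mul_sum, mul_sum]
        congr 1 <;> refine sum_congr rfl fun k hk => ?_
        · rw [lap_mulVec_indicator, if_pos hk, mul_pow]
        · rw [lap_mulVec_indicator, if_neg (mem_compl.mp hk), neg_sq, mul_pow]
    _ ≤ 2 * (r * ∑ k ∈ T, ∑ l ∈ Tᶜ, A k l) ^ 2 := by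
        rw [mul_pow]
        nlinarith [mul_le_mul_of_nonneg_left hout (sq_nonneg r),
          mul_le_mul_of_nonneg_left hin (sq_nonneg r)]

end Laplacian

theorem ubar_dotProduct {n q : ℕ} {V : Fin q → Finset (Fin n)} (hne : ∀ j, (V j).Nonempty)
    (hdisj : ∀ j j', j ≠ j' → Disjoint (V j) (V j')) (j j' : Fin q) :
    ubar V j ⬝ᵥ ubar V j' = if j = j' then 1 else 0 := by
  split_ifs with h
  · subst h
    have hcard : (0 : ℝ) < #(V j) := by exact_mod_cast (hne j).card_pos
    simp [dotProduct, ubar, ← mul_inv, Real.mul_self_sqrt hcard.le, hcard.ne']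
  · refine sum_eq_zero fun a _ => ?_
    by_cases ha : a ∈ V j
    · simp [ubar, ha, disjoint_left.mp (hdisj j j' h) ha]
    · simp [ubar, ha]

theorem sum_sq_relout_le_of_avgrelout_le {n q : ℕ} (hq : 1 ≤ q) {A : Matrix (Fin n) (Fin n) ℝ}
    {V : Fin q → Finset (Fin n)} {c : ℝ} (h : avgrelout A V ≤ c / √(2 * q)) :
    ∑ j, relout A V j ^ 2 ≤ c ^ 2 / 2 := by
  have hq' : (0 : ℝ) < q := by exact_mod_cast hq
  rw [avgrelout, Real.sqrt_le_iff, div_pow, Real.sq_sqrt (by positivity)] at h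
  obtain ⟨-, hmean⟩ := h
  field_simp at hmean ⊢
  linarith

theorem stmt_6_general (n q : ℕ) (hq1 : 1 ≤ q) (hqn : q < n)
    (A : Matrix (Fin n) (Fin n) ℝ)
    (hsymm : ∀ k l, A k l = A l k)
    (hnonneg : ∀ k l, 0 ≤ A k l)
    (lam : Fin n → ℝ)
    (hmono : Monotone lam)
    (u : Fin n → Fin n → ℝ)
    (horth : ∀ i j : Fin n, (∑ a, u i a * u j a) = if i = j then (1 : ℝ) else 0)
    (heig : ∀ i : Fin n, (lap A).mulVec (u i) = lam i • u i)
    (V : Fin q → Finset (Fin n))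
    (hne : ∀ j, (V j).Nonempty)
    (hdisj : ∀ j j' : Fin q, j ≠ j' → Disjoint (V j) (V j'))
    (hlamq : 0 < lam ⟨q, hqn⟩)
    (α : ℝ)
    (hreal : avgrelout A V ≤ α * lam ⟨q, hqn⟩ / Real.sqrt (2 * q))
    (M Mbar : Matrix (Fin n) (Fin n) ℝ)
    (hM : ∀ a b, M a b = ∑ l ∈ Finset.univ.filter (fun l : Fin n => (l : ℕ) < q),
      u l a * u l b)
    (hMbar : ∀ a b, Mbar a b = ∑ j : Fin q, ubar V j a * ubar V j b) :
    (∑ a, ∑ b, (M a b - Mbar a b) ^ 2) ≤ 2 * α ^ 2 := by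
  set S : Finset (Fin n) := {l : Fin n | (l : ℕ) < q}
  set μ := lam ⟨q, hqn⟩
  have hA : A.IsSymm := IsSymm.ext fun k l => hsymm l k
  have hS : #S = Fintype.card (Fin q) := by
    rw [Fin.card_filter_val_lt, Fintype.card_fin]
    omega
  have hSc : ∀ i ∈ Sᶜ, μ ≤ lam i := fun i hi => hmono (by simpa [S, Fin.le_def] using hi)
  have hleak : ∀ j, μ ^ 2 * ∑ i ∈ Sᶜ, (u i ⬝ᵥ ubar V j) ^ 2 ≤ 2 * relout A V j ^ 2 := fun j =>
    (sq_mul_sum_sq_dotProduct_le (lap_isSymm hA) horth heig hlamq.le hSc _).trans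
      (sum_sq_lap_mulVec_indicator_le hA hnonneg _ _)
  have hrelout : ∑ j, relout A V j ^ 2 ≤ (α * μ) ^ 2 / 2 :=
    sum_sq_relout_le_of_avgrelout_le hq1 hreal
  simp only [hM, hMbar]
  rw [sum_sq_sub_projections horth (ubar_dotProduct hne hdisj) hS]
  have hbound : μ ^ 2 * ∑ j, ∑ i ∈ Sᶜ, (u i ⬝ᵥ ubar V j) ^ 2 ≤ μ ^ 2 * α ^ 2 :=
    calc μ ^ 2 * ∑ j, ∑ i ∈ Sᶜ, (u i ⬝ᵥ ubar V j) ^ 2 ≤ ∑ j, 2 * relout A V j ^ 2 := by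
          rw [mul_sum]
          exact sum_le_sum fun j _ => hleak j
      _ = 2 * ∑ j, relout A V j ^ 2 := (mul_sum _ _ _).symm
      _ ≤ μ ^ 2 * α ^ 2 := by linarith [mul_pow α μ 2]
  linarith [le_of_mul_le_mul_left hbound (by positivity)]

/-- if `λ_q > 0` and the partition is α-realizable, then
`‖Ŭ Ŭᵀ − Ū Ūᵀ‖_F² ≤ 2α²`. -/
theorem stmt_6 (n q : ℕ) (hq1 : 1 ≤ q) (hqn : q < n)
    (A : Matrix (Fin n) (Fin n) ℝ)
    (hsymm : ∀ k l, A k l = A l k)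
    (hnonneg : ∀ k l, 0 ≤ A k l)
    (hdiag : ∀ k, A k k = 0)
    (lam : Fin n → ℝ)
    (hmono : Monotone lam)
    (hlam0 : lam ⟨0, Nat.lt_of_le_of_lt (Nat.zero_le q) hqn⟩ = 0)
    (u : Fin n → Fin n → ℝ)
    (horth : ∀ i j : Fin n, (∑ a, u i a * u j a) = if i = j then (1 : ℝ) else 0)
    (heig : ∀ i : Fin n, (lap A).mulVec (u i) = lam i • u i)
    (V : Fin q → Finset (Fin n))
    (hne : ∀ j, (V j).Nonempty)
    (hdisj : ∀ j j' : Fin q, j ≠ j' → Disjoint (V j) (V j'))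
    (hcover : ∀ i : Fin n, ∃ j : Fin q, i ∈ V j)
    (hlamq : 0 < lam ⟨q, hqn⟩)
    (α : ℝ) (hα0 : 0 ≤ α)
    (hreal : avgrelout A V ≤ α * lam ⟨q, hqn⟩ / Real.sqrt (2 * q))
    (M Mbar : Matrix (Fin n) (Fin n) ℝ)
    (hM : ∀ a b, M a b = ∑ l ∈ Finset.univ.filter (fun l : Fin n => (l : ℕ) < q),
      u l a * u l b)
    (hMbar : ∀ a b, Mbar a b = ∑ j : Fin q, ubar V j a * ubar V j b) :
    (∑ a, ∑ b, (M a b - Mbar a b) ^ 2) ≤ 2 * α ^ 2 :=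
  stmt_6_general n q hq1 hqn A hsymm hnonneg lam hmono u horth heig V hne hdisj hlamq α hreal M Mbar
    hM hMbar
end

section
/- Let ε > 0 and define Â_ε = (εI + D)^{−1} A. Then εI + L is invertible, I − Â_ε is invertible, the Neumann series ∑_{t=0}^{∞} Â_ε^t converges to (I − Â_ε)^{−1}, and (εI + L)^{−1} = (∑_{t=0}^{∞} Â_ε^t)(εI + D)^{−1}. -/
/-!
Since `εI + D` is diagonal with entries `ε + ∑ₗ A k l > 0`, every row of `Â_ε` is nonnegative
with sum `(∑ₗ A k l) / (ε + ∑ₗ A k l) < 1`. Hence `‖Â_ε‖_∞ < 1`, so the Neumann series converges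
to `(I - Â_ε)⁻¹`, and `εI + L = (εI + D) - A = (εI + D)(I - Â_ε)` is a product of invertible
matrices.
-/

open Matrix Filter

namespace Matrix

section NeumannSeries

attribute [local instance] Matrix.linftyOpNormedRing Matrix.linftyOpNormedAlgebra

variable {ι : Type*} [Fintype ι] [DecidableEq ι] {M : Matrix ι ι ℝ}

theorem linfty_opNorm_lt_one_of_sum_abs_lt_one (h : ∀ k, ∑ l, |M k l| < 1) : ‖M‖ < 1 := by
  rw [linfty_opNorm_def, ← NNReal.coe_one, NNReal.coe_lt_coe]
  refine (Finset.sup_lt_iff zero_lt_one).2 fun k _ => ?_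
  rw [← NNReal.coe_lt_coe, NNReal.coe_sum]
  simpa only [coe_nnnorm, Real.norm_eq_abs, NNReal.coe_one] using h k

theorem one_sub_mul_tsum_pow_eq_one (h : ∀ k, ∑ l, |M k l| < 1) :
    (1 - M) * ∑' t : ℕ, M ^ t = 1 :=
  mul_neg_geom_series M (linfty_opNorm_lt_one_of_sum_abs_lt_one h)

theorem isUnit_one_sub_of_sum_abs_lt_one (h : ∀ k, ∑ l, |M k l| < 1) : IsUnit (1 - M) :=
  (isUnit_iff_isUnit_det _).2 (isUnit_det_of_right_inverse (one_sub_mul_tsum_pow_eq_one h))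

theorem hasSum_pow_of_sum_abs_lt_one (h : ∀ k, ∑ l, |M k l| < 1) :
    HasSum (fun t : ℕ => M ^ t) (1 - M)⁻¹ := by
  rw [inv_eq_right_inv (one_sub_mul_tsum_pow_eq_one h)]
  exact (summable_geometric_of_norm_lt_one (linfty_opNorm_lt_one_of_sum_abs_lt_one h)).hasSum

end NeumannSeries

theorem sub_eq_mul_one_sub_inv_mul {ι α : Type*} [Fintype ι] [DecidableEq ι] [CommRing α]
    {M : Matrix ι ι α} (hM : IsUnit M) (B : Matrix ι ι α) : M - B = M * (1 - M⁻¹ * B) := by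
  rw [mul_sub, mul_one, ← Matrix.mul_assoc, mul_nonsing_inv _ ((isUnit_iff_isUnit_det _).1 hM),
    Matrix.one_mul]

end Matrix

variable {n : ℕ} {A : Matrix (Fin n) (Fin n) ℝ} {ε : ℝ}

theorem smul_one_add_degMat :
    ε • (1 : Matrix (Fin n) (Fin n) ℝ) + degMat A = diagonal fun k => ε + ∑ l, A k l := by
  rw [degMat, smul_one_eq_diagonal, diagonal_add]

theorem smul_one_add_lap :
    ε • (1 : Matrix (Fin n) (Fin n) ℝ) + lap A = ε • 1 + degMat A - A := by
  rw [lap, add_sub_assoc]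

theorem add_sum_row_pos (hε : 0 < ε) (hA : ∀ k l, 0 ≤ A k l) (k : Fin n) :
    0 < ε + ∑ l, A k l :=
  add_pos_of_pos_of_nonneg hε (Finset.sum_nonneg fun l _ => hA k l)

theorem isUnit_smul_one_add_degMat (hε : 0 < ε) (hA : ∀ k l, 0 ≤ A k l) :
    IsUnit (ε • (1 : Matrix (Fin n) (Fin n) ℝ) + degMat A) := by
  rw [smul_one_add_degMat, isUnit_diagonal, Pi.isUnit_iff]
  exact fun k => (add_sum_row_pos hε hA k).ne'.isUnit

theorem inv_smul_one_add_degMat (hε : 0 < ε) (hA : ∀ k l, 0 ≤ A k l) :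
    (ε • (1 : Matrix (Fin n) (Fin n) ℝ) + degMat A)⁻¹ =
      diagonal fun k => (ε + ∑ l, A k l)⁻¹ := by
  rw [smul_one_add_degMat]
  refine inv_eq_left_inv ?_
  rw [diagonal_mul_diagonal, ← diagonal_one]
  exact congrArg diagonal (funext fun k => inv_mul_cancel₀ (add_sum_row_pos hε hA k).ne')

theorem sum_abs_inv_smul_one_add_degMat_mul_lt_one (hε : 0 < ε) (hA : ∀ k l, 0 ≤ A k l)
    (k : Fin n) :
    ∑ l, |((ε • (1 : Matrix (Fin n) (Fin n) ℝ) + degMat A)⁻¹ * A) k l| < 1 := by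
  have hpos := add_sum_row_pos hε hA k
  simp only [inv_smul_one_add_degMat hε hA, diagonal_mul]
  calc ∑ l, |(ε + ∑ l, A k l)⁻¹ * A k l| = (ε + ∑ l, A k l)⁻¹ * ∑ l, A k l := by
        rw [Finset.mul_sum]
        exact Finset.sum_congr rfl fun l _ =>
          abs_of_nonneg (mul_nonneg (inv_nonneg.2 hpos.le) (hA k l))
    _ < 1 := by rw [inv_mul_lt_one₀ hpos]; linarith

theorem stmt_12_general (n : ℕ)
    (A : Matrix (Fin n) (Fin n) ℝ)
    (hnonneg : ∀ k l, 0 ≤ A k l)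
    (ε : ℝ) (hε : 0 < ε)
    (Ahat : Matrix (Fin n) (Fin n) ℝ)
    (hAhat : Ahat = (ε • (1 : Matrix (Fin n) (Fin n) ℝ) + degMat A)⁻¹ * A) :
    IsUnit (ε • (1 : Matrix (Fin n) (Fin n) ℝ) + lap A) ∧
    IsUnit ((1 : Matrix (Fin n) (Fin n) ℝ) - Ahat) ∧
    Tendsto (fun N : ℕ => ∑ t ∈ Finset.range (N + 1), Ahat ^ t) atTop
      (nhds ((1 : Matrix (Fin n) (Fin n) ℝ) - Ahat)⁻¹) ∧
    (ε • (1 : Matrix (Fin n) (Fin n) ℝ) + lap A)⁻¹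
      = ((1 : Matrix (Fin n) (Fin n) ℝ) - Ahat)⁻¹
        * (ε • (1 : Matrix (Fin n) (Fin n) ℝ) + degMat A)⁻¹ := by
  have hD := isUnit_smul_one_add_degMat hε hnonneg
  have hrow : ∀ k, ∑ l, |Ahat k l| < 1 :=
    hAhat ▸ sum_abs_inv_smul_one_add_degMat_mul_lt_one hε hnonneg
  have hI := isUnit_one_sub_of_sum_abs_lt_one hrow
  have hfactor :
      ε • (1 : Matrix (Fin n) (Fin n) ℝ) + lap A = (ε • 1 + degMat A) * (1 - Ahat) := by
    rw [smul_one_add_lap, sub_eq_mul_one_sub_inv_mul hD, hAhat]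
  refine ⟨hfactor ▸ hD.mul hI, hI, ?_, ?_⟩
  · exact (hasSum_pow_of_sum_abs_lt_one hrow).tendsto_sum_nat.comp (tendsto_add_atTop_nat 1)
  · rw [hfactor, Matrix.mul_inv_rev]

/-- for `ε > 0` and `Â_ε = (εI + D)⁻¹ A`, the matrices `εI + L` and
`I − Â_ε` are invertible, the Neumann series `∑_{t=0}^{∞} Â_ε^t` converges to
`(I − Â_ε)⁻¹`, and `(εI + L)⁻¹ = (∑_{t=0}^{∞} Â_ε^t)(εI + D)⁻¹`. -/
theorem stmt_12 (n : ℕ)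
    (A : Matrix (Fin n) (Fin n) ℝ)
    (hsymm : ∀ k l, A k l = A l k)
    (hnonneg : ∀ k l, 0 ≤ A k l)
    (hdiag : ∀ k, A k k = 0)
    (ε : ℝ) (hε : 0 < ε)
    (Ahat : Matrix (Fin n) (Fin n) ℝ)
    (hAhat : Ahat = (ε • (1 : Matrix (Fin n) (Fin n) ℝ) + degMat A)⁻¹ * A) :
    IsUnit (ε • (1 : Matrix (Fin n) (Fin n) ℝ) + lap A) ∧
    IsUnit ((1 : Matrix (Fin n) (Fin n) ℝ) - Ahat) ∧
    Tendsto (fun N : ℕ => ∑ t ∈ Finset.range (N + 1), Ahat ^ t) atTop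
      (nhds ((1 : Matrix (Fin n) (Fin n) ℝ) - Ahat)⁻¹) ∧
    (ε • (1 : Matrix (Fin n) (Fin n) ℝ) + lap A)⁻¹
      = ((1 : Matrix (Fin n) (Fin n) ℝ) - Ahat)⁻¹
        * (ε • (1 : Matrix (Fin n) (Fin n) ℝ) + degMat A)⁻¹ :=
  stmt_12_general n A hnonneg ε hε Ahat hAhat
end
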